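/- arXiv:2012.13707 — 13 statements merged into one kernel-verified Lean document; each statement's English description precedes it below -/
import Mathlib

section
/- Let X be a finite nonempty set, P a probability distribution on X with P(x) > 0 for all x, ψ : X → (0,∞) a function with ∑_{x∈X} ψ(x)^{-1} ≤ k for some k > 0, and ρ ∈ (-1,0) ∪ (0,∞). Set α = 1/(1+ρ). Then (1/ρ) · log(∑_{x∈X} P(x) · ψ(x)^ρ) ≥ (1/(1-α)) · log(∑_{x∈X} P(x)^α) − log k. -/
/-!
With weights `w = ψ⁻¹`, of total mass at most `k`, and density `g = P ψ^(1+ρ)`, one has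
`∑ w g = ∑ P ψ^ρ` and `∑ w g^α = ∑ P^α`. The claim is then the weighted Hölder (power mean)
inequality between the first and the `α`-th moments of `g`, in logarithmic form: for `ρ > 0` the
exponent `α` lies in `(0, 1)`, for `-1 < ρ < 0` it exceeds `1`, and dividing by `1 - α` turns the
two opposite inequalities into the same one.
-/

open Real Finset

lemma logb_le_of_le_rpow_mul_rpow {b x y z s t : ℝ} (hb : 1 < b) (hx : 0 < x) (hy : 0 < y)
    (hz : 0 < z) (h : x ≤ y ^ s * z ^ t) :
    logb b x ≤ s * logb b y + t * logb b z := by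
  calc logb b x ≤ logb b (y ^ s * z ^ t) := logb_le_logb_of_le hb hx h
    _ = s * logb b y + t * logb b z := by
      rw [logb_mul (rpow_pos_of_pos hy s).ne' (rpow_pos_of_pos hz t).ne',
        logb_rpow_eq_mul_logb_of_pos hy, logb_rpow_eq_mul_logb_of_pos hz]

lemma sum_mul_rpow_le_of_le_one {ι : Type*} (s : Finset ι) (w g : ι → ℝ)
    (hw : ∀ i, 0 ≤ w i) (hg : ∀ i, 0 ≤ g i) {α : ℝ} (hα0 : 0 < α) (hα1 : α ≤ 1) :
    ∑ i ∈ s, w i * g i ^ α ≤ (∑ i ∈ s, w i) ^ (1 - α) * (∑ i ∈ s, w i * g i) ^ α := by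
  have h := inner_le_weight_mul_Lp_of_nonneg s (one_le_inv_iff₀.2 ⟨hα0, hα1⟩) w (g · ^ α) hw
    fun i ↦ rpow_nonneg (hg i) α
  simpa only [inv_inv, ← rpow_mul (hg _), mul_inv_cancel₀ hα0.ne', rpow_one] using h

theorem logb_sum_mul_rpow_le {ι : Type*} [Fintype ι] [Nonempty ι] {b : ℝ} (hb : 1 < b)
    (w g : ι → ℝ) (hw : ∀ i, 0 < w i) (hg : ∀ i, 0 < g i) {α : ℝ} (hα0 : 0 < α) (hα1 : α ≠ 1) :
    1 / (1 - α) * logb b (∑ i, w i * g i ^ α) ≤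
      α / (1 - α) * logb b (∑ i, w i * g i) + logb b (∑ i, w i) := by
  have hA : 0 < ∑ i, w i * g i ^ α :=
    sum_pos (fun i _ ↦ mul_pos (hw i) (rpow_pos_of_pos (hg i) α)) univ_nonempty
  have hB : 0 < ∑ i, w i * g i := sum_pos (fun i _ ↦ mul_pos (hw i) (hg i)) univ_nonempty
  have hW : 0 < ∑ i, w i := sum_pos (fun i _ ↦ hw i) univ_nonempty
  rw [← sub_nonneg]
  have hdiff : α / (1 - α) * logb b (∑ i, w i * g i) + logb b (∑ i, w i) -
      1 / (1 - α) * logb b (∑ i, w i * g i ^ α) =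
      (α * logb b (∑ i, w i * g i) + (1 - α) * logb b (∑ i, w i) -
        logb b (∑ i, w i * g i ^ α)) / (1 - α) := by
    field_simp [sub_ne_zero.2 hα1.symm]
  rcases lt_or_gt_of_ne hα1 with hlt | hgt
  · have hH := logb_le_of_le_rpow_mul_rpow hb hA hW hB <|
      sum_mul_rpow_le_of_le_one univ w g (fun i ↦ (hw i).le) (fun i ↦ (hg i).le) hα0 hlt.le
    rw [hdiff]
    exact div_nonneg (by linarith) (sub_pos.2 hlt).le
  · have hH := logb_le_of_le_rpow_mul_rpow hb hB hW hA <|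
      inner_le_weight_mul_Lp_of_nonneg univ hgt.le w g (fun i ↦ (hw i).le) fun i ↦ (hg i).le
    have hαH := mul_le_mul_of_nonneg_left hH hα0.le
    rw [mul_add, ← mul_assoc, ← mul_assoc, mul_sub, mul_one, mul_inv_cancel₀ hα0.ne'] at hαH
    rw [hdiff]
    exact div_nonneg_of_nonpos (by linarith) (sub_neg.2 hgt).le

theorem stmt0_general {X : Type*} [Fintype X] [Nonempty X]
    (P : X → ℝ) (hP : ∀ x, 0 < P x)
    (ψ : X → ℝ) (hψ : ∀ x, 0 < ψ x)
    (k : ℝ) (hksum : ∑ x, (ψ x)⁻¹ ≤ k)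
    (ρ : ℝ) (hρ : ρ ∈ Set.Ioo (-1 : ℝ) 0 ∪ Set.Ioi (0 : ℝ))
    (α : ℝ) (hα : α = 1 / (1 + ρ)) :
    (1 / ρ) * Real.logb 2 (∑ x, P x * ψ x ^ ρ) ≥
      (1 / (1 - α)) * Real.logb 2 (∑ x, P x ^ α) - Real.logb 2 k := by
  obtain ⟨hρ1, hρ0⟩ : 0 < 1 + ρ ∧ ρ ≠ 0 := by
    rcases hρ with ⟨h₁, h₂⟩ | (h : 0 < ρ)
    · exact ⟨by linarith, h₂.ne⟩
    · exact ⟨by linarith, h.ne'⟩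
  have hαρ : (1 + ρ) * α = 1 := by rw [hα]; field_simp
  have hα1 : α ≠ 1 := fun h ↦ hρ0 (by rw [h] at hαρ; linarith)
  have hαρ' : α / (1 - α) = 1 / ρ := by
    rw [hα]; field_simp; rw [add_sub_cancel_left, div_self hρ0]
  have key := logb_sum_mul_rpow_le one_lt_two (fun x ↦ (ψ x)⁻¹) (fun x ↦ P x * ψ x ^ (1 + ρ))
    (fun x ↦ inv_pos.2 (hψ x)) (fun x ↦ mul_pos (hP x) (rpow_pos_of_pos (hψ x) _))
    (by rw [hα]; positivity) hα1
  have hmoment : ∀ x, (ψ x)⁻¹ * (P x * ψ x ^ (1 + ρ)) = P x * ψ x ^ ρ := fun x ↦ by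
    rw [rpow_add (hψ x), rpow_one]; field_simp [(hψ x).ne']
  have hpower : ∀ x, (ψ x)⁻¹ * (P x * ψ x ^ (1 + ρ)) ^ α = P x ^ α := fun x ↦ by
    rw [mul_rpow (hP x).le (rpow_nonneg (hψ x).le _), ← rpow_mul (hψ x).le, hαρ, rpow_one]
    field_simp [(hψ x).ne']
  simp only [hmoment, hpower, hαρ'] at key
  have hmass := logb_le_logb_of_le one_lt_two
    (sum_pos (fun x _ ↦ inv_pos.2 (hψ x)) univ_nonempty) hksum
  linarith

theorem stmt0 {X : Type*} [Fintype X] [Nonempty X]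
    (P : X → ℝ) (hP : ∀ x, 0 < P x) (hPsum : ∑ x, P x = 1)
    (ψ : X → ℝ) (hψ : ∀ x, 0 < ψ x)
    (k : ℝ) (hk : 0 < k) (hksum : ∑ x, (ψ x)⁻¹ ≤ k)
    (ρ : ℝ) (hρ : ρ ∈ Set.Ioo (-1 : ℝ) 0 ∪ Set.Ioi (0 : ℝ))
    (α : ℝ) (hα : α = 1 / (1 + ρ)) :
    (1 / ρ) * Real.logb 2 (∑ x, P x * ψ x ^ ρ) ≥
      (1 / (1 - α)) * Real.logb 2 (∑ x, P x ^ α) - Real.logb 2 k :=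
  stmt0_general P hP ψ hψ k hksum ρ hρ α hα
end

section
/- Let X be a finite set, P and Q probability distributions on X with full support, ρ > 0, α = 1/(1+ρ), and Z_Q = ∑_{x} Q(x)^α. Suppose ψ : X → (0,∞) satisfies ψ(x) ≤ c · Z_Q / Q(x)^α for all x, for some c > 0. Then ∑_x P(x) ψ(x)^ρ ≤ 2^{ρ·(H_α(P) + I_α(P,Q) + log c)}, where H_α(P) = (1/(1-α)) log ∑_x P(x)^α and I_α(P,Q) = (α/(1-α)) log( ∑_x P(x) · [∑_{x'} (Q(x')/Q(x))^α]^{(1-α)/α} ) − H_α(P). -/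
open Real Finset

/-!
Since `∑ x', (Q x' / Q x) ^ α = Z_Q / Q x ^ α` and `(1 - α) / α = ρ`, the sum inside `I_α` is
`T = ∑ x, P x * (Z_Q / Q x ^ α) ^ ρ`, and as `α / (1 - α) = 1 / ρ` the two `H_α(P)` terms cancel,
so the right-hand side is just `c ^ ρ * T`. The bound is then the termwise inequality
`ψ x ^ ρ ≤ c ^ ρ * (Z_Q / Q x ^ α) ^ ρ`.
-/

lemma one_sub_div_eq_of_eq_one_div_one_add {ρ α : ℝ} (hρ : 0 < ρ) (hα : α = 1 / (1 + ρ)) :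
    (1 - α) / α = ρ := by
  have : 1 + ρ ≠ 0 := by linarith
  subst hα
  field_simp
  ring

lemma div_one_sub_eq_inv_of_eq_one_div_one_add {ρ α : ℝ} (hρ : 0 < ρ) (hα : α = 1 / (1 + ρ)) :
    α / (1 - α) = ρ⁻¹ := by
  rw [← one_sub_div_eq_of_eq_one_div_one_add hρ hα, inv_div]

lemma sum_div_rpow {ι : Type*} (s : Finset ι) {Q : ι → ℝ} (hQ : ∀ i ∈ s, 0 ≤ Q i) {q : ℝ}
    (hq : 0 ≤ q) (α : ℝ) : ∑ i ∈ s, (Q i / q) ^ α = (∑ i ∈ s, Q i ^ α) / q ^ α := by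
  rw [sum_div]
  exact sum_congr rfl fun i hi => div_rpow (hQ i hi) hq α

lemma sum_mul_rpow_le_of_le_mul {ι : Type*} (s : Finset ι) {w f g : ι → ℝ} {c ρ : ℝ}
    (hw : ∀ i ∈ s, 0 ≤ w i) (hf : ∀ i ∈ s, 0 ≤ f i) (hfg : ∀ i ∈ s, f i ≤ c * g i)
    (hc : 0 < c) (hρ : 0 ≤ ρ) :
    ∑ i ∈ s, w i * f i ^ ρ ≤ c ^ ρ * ∑ i ∈ s, w i * g i ^ ρ := by
  rw [mul_sum]
  refine sum_le_sum fun i hi => ?_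
  have hg : 0 ≤ g i := nonneg_of_mul_nonneg_right ((hf i hi).trans (hfg i hi)) hc
  calc w i * f i ^ ρ ≤ w i * (c * g i) ^ ρ := by
        gcongr
        · exact hw i hi
        · exact hf i hi
        · exact hfg i hi
    _ = c ^ ρ * (w i * g i ^ ρ) := by rw [mul_rpow hc.le hg]; ring

lemma rpow_logb_add_mul_logb {b x y : ℝ} (hb : 0 < b) (hb1 : b ≠ 1) (hx : 0 < x) (hy : 0 < y)
    (ρ : ℝ) : b ^ (logb b x + ρ * logb b y) = x * y ^ ρ := by
  rw [rpow_add hb, rpow_logb hb hb1 hx, mul_comm ρ, rpow_mul hb.le, rpow_logb hb hb1 hy]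

theorem stmt3_general {X : Type*} [Fintype X]
    (P Q : X → ℝ) (hP : ∀ x, 0 < P x)
    (hQ : ∀ x, 0 < Q x)
    (ρ : ℝ) (hρ : 0 < ρ) (α : ℝ) (hα : α = 1 / (1 + ρ))
    (ZQ : ℝ) (hZQ : ZQ = ∑ x, Q x ^ α)
    (ψ : X → ℝ) (hψpos : ∀ x, 0 < ψ x)
    (c : ℝ) (hc : 0 < c) (hψ : ∀ x, ψ x ≤ c * ZQ / Q x ^ α) :
    ∑ x, P x * ψ x ^ ρ ≤
      (2 : ℝ) ^ (ρ * ((1 / (1 - α)) * Real.logb 2 (∑ x, P x ^ α)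
        + ((α / (1 - α)) * Real.logb 2
            (∑ x, P x * (∑ x', (Q x' / Q x) ^ α) ^ ((1 - α) / α))
          - (1 / (1 - α)) * Real.logb 2 (∑ x, P x ^ α))
        + Real.logb 2 c)) := by
  rcases isEmpty_or_nonempty X with hX | hX
  · simp only [univ_eq_empty, sum_empty]
    positivity
  have hZQ_pos : 0 < ZQ := hZQ ▸ sum_pos (fun x _ => rpow_pos_of_pos (hQ x) α) univ_nonempty
  have hZQ_div : ∀ x, ∑ x', (Q x' / Q x) ^ α = ZQ / Q x ^ α := fun x => by
    rw [hZQ, sum_div_rpow univ (fun x' _ => (hQ x').le) (hQ x).le]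
  set T := ∑ x, P x * (ZQ / Q x ^ α) ^ ρ
  have hT : 0 < T := sum_pos (fun x _ => by have := hP x; have := hQ x; positivity) univ_nonempty
  have hexp : ρ * ((1 / (1 - α)) * logb 2 (∑ x, P x ^ α)
        + ((α / (1 - α)) * logb 2 (∑ x, P x * (∑ x', (Q x' / Q x) ^ α) ^ ((1 - α) / α))
          - (1 / (1 - α)) * logb 2 (∑ x, P x ^ α))
        + logb 2 c) = logb 2 T + ρ * logb 2 c := by
    simp only [hZQ_div, one_sub_div_eq_of_eq_one_div_one_add hρ hα,
      div_one_sub_eq_inv_of_eq_one_div_one_add hρ hα]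
    field_simp
    ring
  rw [hexp, rpow_logb_add_mul_logb two_pos (by norm_num) hT hc, mul_comm]
  exact sum_mul_rpow_le_of_le_mul univ (fun x _ => (hP x).le) (fun x _ => (hψpos x).le)
    (fun x _ => (hψ x).trans_eq (mul_div_assoc _ _ _)) hc hρ.le

theorem stmt3 {X : Type*} [Fintype X]
    (P Q : X → ℝ) (hP : ∀ x, 0 < P x) (hPsum : ∑ x, P x = 1)
    (hQ : ∀ x, 0 < Q x) (hQsum : ∑ x, Q x = 1)
    (ρ : ℝ) (hρ : 0 < ρ) (α : ℝ) (hα : α = 1 / (1 + ρ))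
    (ZQ : ℝ) (hZQ : ZQ = ∑ x, Q x ^ α)
    (ψ : X → ℝ) (hψpos : ∀ x, 0 < ψ x)
    (c : ℝ) (hc : 0 < c) (hψ : ∀ x, ψ x ≤ c * ZQ / Q x ^ α) :
    ∑ x, P x * ψ x ^ ρ ≤
      (2 : ℝ) ^ (ρ * ((1 / (1 - α)) * Real.logb 2 (∑ x, P x ^ α)
        + ((α / (1 - α)) * Real.logb 2
            (∑ x, P x * (∑ x', (Q x' / Q x) ^ α) ^ ((1 - α) / α))
          - (1 / (1 - α)) * Real.logb 2 (∑ x, P x ^ α))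
        + Real.logb 2 c)) :=
  stmt3_general P Q hP hQ ρ hρ α hα ZQ hZQ ψ hψpos c hc hψ
end

section
/- Let P and Q be probability distributions with full support on a finite set X, let ρ > -1, ρ ≠ 0, and α = 1/(1+ρ). Then I_α(P,Q) ≥ 0, with equality if and only if P = Q, where I_α(P,Q) = (α/(1-α)) log( ∑_x P(x) · [∑_{x'} (Q(x')/Q(x))^α]^{(1-α)/α} ) − (1/(1-α)) log(∑_x P(x)^α). -/
open Real Finset

theorem stmt5 {X : Type*} [Fintype X] [Nonempty X]
    (P Q : X → ℝ) (hP : ∀ x, 0 < P x) (hPsum : ∑ x, P x = 1)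
    (hQ : ∀ x, 0 < Q x) (hQsum : ∑ x, Q x = 1)
    (ρ : ℝ) (hρ : -1 < ρ) (hρ0 : ρ ≠ 0)
    (α : ℝ) (hα : α = 1 / (1 + ρ))
    (Iα : ℝ)
    (hIα : Iα = (α / (1 - α)) * Real.logb 2
        (∑ x, P x * (∑ x', (Q x' / Q x) ^ α) ^ ((1 - α) / α))
      - (1 / (1 - α)) * Real.logb 2 (∑ x, P x ^ α)) :
    0 ≤ Iα ∧ (Iα = 0 ↔ P = Q) := by
  have h1ρ : 0 < 1 + ρ := by linarith
  have hαpos : 0 < α := by rw [hα]; positivity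
  have hα1 : α ≠ 1 := by
    rw [hα]; intro h
    rw [div_eq_iff h1ρ.ne', one_mul] at h
    exact hρ0 (by linarith)
  have hs : 1 - α ≠ 0 := sub_ne_zero.mpr (Ne.symm hα1)
  set A : ℝ := ∑ x, P x * Q x ^ (α - 1) with hAdef
  set B : ℝ := ∑ x, Q x ^ α with hBdef
  set C : ℝ := ∑ x, P x ^ α with hCdef
  have hA : 0 < A := Finset.sum_pos
    (fun x _ => mul_pos (hP x) (Real.rpow_pos_of_pos (hQ x) _)) univ_nonempty
  have hB : 0 < B := Finset.sum_pos (fun x _ => Real.rpow_pos_of_pos (hQ x) _) univ_nonempty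
  have hC : 0 < C := Finset.sum_pos (fun x _ => Real.rpow_pos_of_pos (hP x) _) univ_nonempty
  have hmain : ∑ x, P x * (∑ x', (Q x' / Q x) ^ α) ^ ((1 - α) / α)
      = A * B ^ ((1 - α) / α) := by
    rw [hAdef, Finset.sum_mul]
    refine Finset.sum_congr rfl fun x _ => ?_
    have h1 : ∑ x', (Q x' / Q x) ^ α = B / Q x ^ α := by
      rw [hBdef, Finset.sum_div]
      exact Finset.sum_congr rfl fun x' _ => Real.div_rpow (hQ x').le (hQ x).le α
    have h3 : (Q x ^ α : ℝ) ≠ 0 := (Real.rpow_pos_of_pos (hQ x) _).ne'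
    rw [h1, Real.div_rpow hB.le (Real.rpow_pos_of_pos (hQ x) _).le,
      ← Real.rpow_mul (hQ x).le]
    have h2 : α * ((1 - α) / α) = 1 - α := by field_simp
    rw [h2, show α - 1 = -(1 - α) by ring, Real.rpow_neg (hQ x).le]
    have h4 : (Q x ^ (1 - α) : ℝ) ≠ 0 := (Real.rpow_pos_of_pos (hQ x) _).ne'
    field_simp
  have hlog2 : (0:ℝ) < Real.log 2 := Real.log_pos one_lt_two
  set D : ℝ := α * Real.log A + (1 - α) * Real.log B - Real.log C with hDdef
  have hI2 : Iα = D / ((1 - α) * Real.log 2) := by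
    rw [hIα, hmain]
    rw [Real.logb, Real.logb, Real.log_mul hA.ne' (Real.rpow_pos_of_pos hB _).ne',
      Real.log_rpow hB, hDdef]
    field_simp
  -- Jensen setup
  have hw0 : ∀ x ∈ univ, 0 < Q x ^ α / B := fun x _ => div_pos (Real.rpow_pos_of_pos (hQ x) _) hB
  have hw1 : ∑ x, Q x ^ α / B = 1 := by rw [← Finset.sum_div, ← hBdef, div_self hB.ne']
  have hmem : ∀ x ∈ univ, P x / Q x ∈ Set.Ici (0:ℝ) := fun x _ => (div_pos (hP x) (hQ x)).le
  have hwp : ∑ x, (Q x ^ α / B) • (P x / Q x) = A / B := by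
    rw [hAdef, Finset.sum_div]
    refine Finset.sum_congr rfl fun x _ => ?_
    rw [smul_eq_mul, Real.rpow_sub (hQ x), Real.rpow_one]
    ring
  have hwpf : ∑ x, (Q x ^ α / B) • ((fun t : ℝ => t ^ α) (P x / Q x)) = C / B := by
    rw [hCdef, Finset.sum_div]
    refine Finset.sum_congr rfl fun x _ => ?_
    have h3 : (Q x ^ α : ℝ) ≠ 0 := (Real.rpow_pos_of_pos (hQ x) _).ne'
    rw [smul_eq_mul]
    simp only
    rw [Real.div_rpow (hP x).le (hQ x).le]
    field_simp
  have hAB : 0 < A / B := div_pos hA hB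
  have hCB : 0 < C / B := div_pos hC hB
  -- constant ratio implies equality of distributions
  have hconst : (∀ j : X, P j / Q j = A / B) → P = Q := by
    intro h
    have hAB1 : A / B = 1 := by
      have h5 : ∑ x, P x = ∑ x, (A / B) * Q x := by
        refine Finset.sum_congr rfl fun x _ => ?_
        rw [← h x]; exact (div_mul_cancel₀ (P x) (hQ x).ne').symm
      rw [hPsum, ← Finset.mul_sum, hQsum, mul_one] at h5
      exact h5.symm
    funext x
    have h6 := h x; rw [hAB1, div_eq_one_iff_eq (hQ x).ne'] at h6; exact h6
  -- P = Q implies Iα = 0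
  have hPQ0 : P = Q → Iα = 0 := by
    intro h
    subst h
    have hABeq : A = B := by
      rw [hAdef, hBdef]
      refine Finset.sum_congr rfl fun x _ => ?_
      rw [Real.rpow_sub (hP x), Real.rpow_one, mul_comm, div_mul_cancel₀ _ (hP x).ne']
    have hCBeq : C = B := by rw [hCdef, hBdef]
    have hD0 : D = 0 := by rw [hDdef, hABeq, hCBeq]; ring
    rw [hI2, hD0, zero_div]
  obtain hlt | hgt := lt_or_gt_of_ne hα1
  · -- α < 1 : concave case
    have hcc := Real.strictConcaveOn_rpow hαpos hlt
    have hle : C / B ≤ (A / B) ^ α := by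
      have h7 := hcc.concaveOn.le_map_sum (fun x hx => (hw0 x hx).le) hw1 hmem
      rw [hwp, hwpf] at h7
      exact h7
    have hD : 0 ≤ D := by
      have h8 := Real.log_le_log hCB hle
      rw [Real.log_rpow hAB, Real.log_div hC.ne' hB.ne', Real.log_div hA.ne' hB.ne'] at h8
      rw [hDdef]; nlinarith [h8]
    have hpos : 0 < (1 - α) * Real.log 2 := mul_pos (by linarith) hlog2
    refine ⟨by rw [hI2]; exact div_nonneg hD hpos.le, ?_, hPQ0⟩
    intro h0
    have hD0 : D = 0 := by
      rw [hI2] at h0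
      exact (div_eq_zero_iff.mp h0).resolve_right hpos.ne'
    have hCBeq : (A / B) ^ α = C / B := by
      have hlogeq : Real.log ((A / B) ^ α) = Real.log (C / B) := by
        rw [Real.log_rpow hAB, Real.log_div hC.ne' hB.ne', Real.log_div hA.ne' hB.ne']
        rw [hDdef] at hD0; linarith
      calc (A/B)^α = Real.exp (Real.log ((A/B)^α)) :=
            (Real.exp_log (Real.rpow_pos_of_pos hAB _)).symm
        _ = Real.exp (Real.log (C/B)) := by rw [hlogeq]
        _ = C/B := Real.exp_log hCB
    have h9 := (hcc.map_sum_eq_iff hw0 hw1 hmem).mp (by rw [hwp, hwpf]; exact hCBeq)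
    apply hconst
    intro j
    have hj := h9 j (mem_univ j)
    rw [hwp] at hj
    exact hj
  · -- α > 1 : convex case
    have hcc := strictConvexOn_rpow hgt
    have hle : (A / B) ^ α ≤ C / B := by
      have h7 := hcc.convexOn.map_sum_le (fun x hx => (hw0 x hx).le) hw1 hmem
      rw [hwp, hwpf] at h7
      exact h7
    have hD : D ≤ 0 := by
      have h8 := Real.log_le_log (Real.rpow_pos_of_pos hAB _) hle
      rw [Real.log_rpow hAB, Real.log_div hC.ne' hB.ne', Real.log_div hA.ne' hB.ne'] at h8
      rw [hDdef]; nlinarith [h8]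
    have hneg : (1 - α) * Real.log 2 < 0 :=
      mul_neg_of_neg_of_pos (by linarith) hlog2
    refine ⟨by rw [hI2]; exact div_nonneg_iff.mpr (Or.inr ⟨hD, hneg.le⟩), ?_, hPQ0⟩
    intro h0
    have hD0 : D = 0 := by
      rw [hI2] at h0
      exact (div_eq_zero_iff.mp h0).resolve_right hneg.ne
    have hCBeq : (A / B) ^ α = C / B := by
      have hlogeq : Real.log ((A / B) ^ α) = Real.log (C / B) := by
        rw [Real.log_rpow hAB, Real.log_div hC.ne' hB.ne', Real.log_div hA.ne' hB.ne']
        rw [hDdef] at hD0; linarith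
      calc (A/B)^α = Real.exp (Real.log ((A/B)^α)) :=
            (Real.exp_log (Real.rpow_pos_of_pos hAB _)).symm
        _ = Real.exp (Real.log (C/B)) := by rw [hlogeq]
        _ = C/B := Real.exp_log hCB
    have h9 := (hcc.map_sum_eq_iff hw0 hw1 hmem).mp (by rw [hwp, hwpf]; exact hCBeq)
    apply hconst
    intro j
    have hj := h9 j (mem_univ j)
    rw [hwp] at hj
    exact hj
end

section
/- Let X be a finite set, P a probability distribution on X with full support, and L : X → ℕ a length function satisfying the Kraft inequality ∑_{x∈X} 2^{-L(x)} ≤ 1. Then for any ρ > 0 and α = 1/(1+ρ), (1/ρ) · log(∑_{x∈X} P(x) · 2^{ρ·L(x)}) ≥ H_α(P), where H_α(P) = (1/(1-α)) log ∑_x P(x)^α. -/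
open Real Finset

/-! With `α = 1/(1+ρ)` one has `ρα = 1 - α`, hence `P^α = (P·2^{ρL})^α · (2^{-L})^{1-α}`.
Hölder's inequality with exponents `1/α` and `1/(1-α)`, together with Kraft's inequality, gives
`∑ P^α ≤ (∑ P·2^{ρL})^α`; taking logarithms and using `α/(1-α) = 1/ρ` yields the bound. -/

theorem Real.sum_rpow_mul_rpow_one_sub_le {ι : Type*} (s : Finset ι) {f g : ι → ℝ}
    (hf : ∀ i ∈ s, 0 ≤ f i) (hg : ∀ i ∈ s, 0 ≤ g i) {α : ℝ} (hα₀ : 0 < α) (hα₁ : α < 1) :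
    ∑ i ∈ s, f i ^ α * g i ^ (1 - α) ≤ (∑ i ∈ s, f i) ^ α * (∑ i ∈ s, g i) ^ (1 - α) := by
  have hα₁' : 0 < 1 - α := sub_pos.mpr hα₁
  have holder := inner_le_Lp_mul_Lq_of_nonneg s (HolderConjugate.inv_one_sub_inv hα₀ hα₁)
    (f := fun i => f i ^ α) (g := fun i => g i ^ (1 - α))
    (fun i hi => rpow_nonneg (hf i hi) _) (fun i hi => rpow_nonneg (hg i hi) _)
  simp only [one_div, inv_inv] at holder
  rwa [sum_congr rfl fun i hi => rpow_rpow_inv (hf i hi) hα₀.ne',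
    sum_congr rfl fun i hi => rpow_rpow_inv (hg i hi) hα₁'.ne'] at holder

theorem sum_rpow_le_of_sum_le_one {ι : Type*} (s : Finset ι) {p q : ι → ℝ}
    (hp : ∀ i ∈ s, 0 ≤ p i) (hq : ∀ i ∈ s, 0 < q i) (hq₁ : ∑ i ∈ s, q i ≤ 1)
    {ρ : ℝ} (hρ : 0 < ρ) :
    ∑ i ∈ s, p i ^ (1 + ρ)⁻¹ ≤ (∑ i ∈ s, p i * q i ^ (-ρ)) ^ (1 + ρ)⁻¹ := by
  set α := (1 + ρ)⁻¹
  have hα₀ : 0 < α := by positivity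
  have hα₁ : α < 1 := inv_lt_one_of_one_lt₀ (by linarith)
  have hsplit : ∀ i ∈ s, p i ^ α = (p i * q i ^ (-ρ)) ^ α * q i ^ (1 - α) := by
    intro i hi
    have hexp : -ρ * α + (1 - α) = 0 := by
      simp only [α]; field_simp; ring
    rw [mul_rpow (hp i hi) (rpow_nonneg (hq i hi).le _), ← rpow_mul (hq i hi).le, mul_assoc,
      ← rpow_add (hq i hi), hexp, rpow_zero, mul_one]
  calc ∑ i ∈ s, p i ^ α
      = ∑ i ∈ s, (p i * q i ^ (-ρ)) ^ α * q i ^ (1 - α) := sum_congr rfl hsplit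
    _ ≤ (∑ i ∈ s, p i * q i ^ (-ρ)) ^ α * (∑ i ∈ s, q i) ^ (1 - α) :=
        sum_rpow_mul_rpow_one_sub_le s
          (fun i hi => mul_nonneg (hp i hi) (rpow_nonneg (hq i hi).le _))
          (fun i hi => (hq i hi).le) hα₀ hα₁
    _ ≤ (∑ i ∈ s, p i * q i ^ (-ρ)) ^ α :=
        mul_le_of_le_one_right (rpow_nonneg (sum_nonneg fun i hi =>
            mul_nonneg (hp i hi) (rpow_nonneg (hq i hi).le _)) _)
          (rpow_le_one (sum_nonneg fun i hi => (hq i hi).le) hq₁ (by linarith))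

theorem stmt6_general {X : Type*} [Fintype X]
    (P : X → ℝ) (hP : ∀ x, 0 < P x)
    (L : X → ℕ) (hKraft : ∑ x, (2 : ℝ) ^ (-(L x : ℝ)) ≤ 1)
    (ρ : ℝ) (hρ : 0 < ρ) (α : ℝ) (hα : α = 1 / (1 + ρ)) :
    (1 / ρ) * Real.logb 2 (∑ x, P x * (2 : ℝ) ^ (ρ * (L x : ℝ))) ≥
      (1 / (1 - α)) * Real.logb 2 (∑ x, P x ^ α) := by
  rcases isEmpty_or_nonempty X with hX | hX
  · simp
  rw [one_div] at hα
  subst hα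
  have hcodeword : ∀ x, ((2 : ℝ) ^ (-(L x : ℝ))) ^ (-ρ) = 2 ^ (ρ * (L x : ℝ)) := fun x => by
    rw [← rpow_mul zero_le_two, neg_mul_neg, mul_comm]
  have hmoment := sum_rpow_le_of_sum_le_one univ (fun x _ => (hP x).le)
    (fun x _ => rpow_pos_of_pos two_pos _) hKraft hρ
  simp only [hcodeword] at hmoment
  have hrenyi_pos : 0 < ∑ x, P x ^ (1 + ρ)⁻¹ :=
    sum_pos (fun x _ => rpow_pos_of_pos (hP x) _) univ_nonempty
  have hmoment_pos : 0 < ∑ x, P x * (2 : ℝ) ^ (ρ * (L x : ℝ)) :=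
    sum_pos (fun x _ => mul_pos (hP x) (rpow_pos_of_pos two_pos _)) univ_nonempty
  have hcoef : 1 / (1 - (1 + ρ)⁻¹) * (1 + ρ)⁻¹ = 1 / ρ := by
    field_simp
    rw [add_sub_cancel_left, div_self hρ.ne']
  calc 1 / (1 - (1 + ρ)⁻¹) * logb 2 (∑ x, P x ^ (1 + ρ)⁻¹)
      ≤ 1 / (1 - (1 + ρ)⁻¹) * ((1 + ρ)⁻¹ * logb 2 (∑ x, P x * (2 : ℝ) ^ (ρ * (L x : ℝ)))) := by
        rw [← logb_rpow_eq_mul_logb_of_pos hmoment_pos]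
        gcongr
        · rw [one_div_nonneg, sub_nonneg]
          exact inv_le_one_of_one_le₀ (by linarith)
        · exact one_lt_two
    _ = 1 / ρ * logb 2 (∑ x, P x * (2 : ℝ) ^ (ρ * (L x : ℝ))) := by rw [← mul_assoc, hcoef]

theorem stmt6 {X : Type*} [Fintype X]
    (P : X → ℝ) (hP : ∀ x, 0 < P x) (hPsum : ∑ x, P x = 1)
    (L : X → ℕ) (hKraft : ∑ x, (2 : ℝ) ^ (-(L x : ℝ)) ≤ 1)
    (ρ : ℝ) (hρ : 0 < ρ) (α : ℝ) (hα : α = 1 / (1 + ρ)) :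
    (1 / ρ) * Real.logb 2 (∑ x, P x * (2 : ℝ) ^ (ρ * (L x : ℝ))) ≥
      (1 / (1 - α)) * Real.logb 2 (∑ x, P x ^ α) :=
  stmt6_general P hP L hKraft ρ hρ α hα
end

section
/- Let X be a finite set, P a probability distribution on X with full support, ρ > 0, α = 1/(1+ρ), and Z = ∑_x P(x)^α. Define L(x) = ⌈log(Z / P(x)^α)⌉ (ceiling of the base-2 logarithm). Then L satisfies the Kraft inequality ∑_x 2^{-L(x)} ≤ 1, and H_α(P) ≤ (1/ρ)·log(∑_x P(x)·2^{ρ·L(x)}) ≤ H_α(P) + 1. -/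
/-!
Write `Z = ∑ P x ^ α` and `t x = Z / P x ^ α`, so that `L x = ⌈log t x⌉` and
`t x ≤ 2 ^ L x < 2 t x`. Kraft follows from `2 ^ (-L x) ≤ P x ^ α / Z`. Since `α (1 + ρ) = 1`,
`P x * t x ^ ρ = Z ^ ρ * P x ^ α`, so summing `t x ^ ρ ≤ 2 ^ (ρ L x) < 2 ^ ρ t x ^ ρ` against `P`
gives `Z ^ (1 + ρ) ≤ ∑ P x 2 ^ (ρ L x) ≤ 2 ^ ρ Z ^ (1 + ρ)`. Taking `log` and dividing by `ρ`
yields the two bounds, as `H_α(P) = (1 + ρ) / ρ * log Z`.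
-/

open Real Finset

section CeilLogb

variable {t : ℝ}

lemma le_two_rpow_ceil_logb (ht : 0 < t) : t ≤ (2 : ℝ) ^ (⌈logb 2 t⌉ : ℝ) :=
  (logb_le_iff_le_rpow one_lt_two ht).1 (Int.le_ceil _)

lemma two_rpow_ceil_logb_lt (ht : 0 < t) : (2 : ℝ) ^ (⌈logb 2 t⌉ : ℝ) < 2 * t :=
  calc (2 : ℝ) ^ (⌈logb 2 t⌉ : ℝ) < 2 ^ (logb 2 t + 1) :=
        rpow_lt_rpow_of_exponent_lt one_lt_two (Int.ceil_lt_add_one _)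
    _ = 2 * t := by rw [rpow_add two_pos, rpow_logb two_pos (by norm_num) ht, rpow_one, mul_comm]

lemma two_rpow_neg_ceil_logb_le (ht : 0 < t) : (2 : ℝ) ^ (-(⌈logb 2 t⌉ : ℝ)) ≤ t⁻¹ := by
  rw [rpow_neg zero_le_two]
  exact inv_anti₀ ht (le_two_rpow_ceil_logb ht)

lemma two_rpow_mul_ceil_logb_eq (ρ : ℝ) :
    (2 : ℝ) ^ (ρ * ⌈logb 2 t⌉) = ((2 : ℝ) ^ (⌈logb 2 t⌉ : ℝ)) ^ ρ := by
  rw [mul_comm, rpow_mul zero_le_two]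

lemma rpow_le_two_rpow_mul_ceil_logb (ht : 0 < t) {ρ : ℝ} (hρ : 0 ≤ ρ) :
    t ^ ρ ≤ (2 : ℝ) ^ (ρ * ⌈logb 2 t⌉) := by
  rw [two_rpow_mul_ceil_logb_eq]
  exact rpow_le_rpow ht.le (le_two_rpow_ceil_logb ht) hρ

lemma two_rpow_mul_ceil_logb_le (ht : 0 < t) {ρ : ℝ} (hρ : 0 ≤ ρ) :
    (2 : ℝ) ^ (ρ * ⌈logb 2 t⌉) ≤ 2 ^ ρ * t ^ ρ := by
  rw [two_rpow_mul_ceil_logb_eq, ← mul_rpow zero_le_two ht.le]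
  exact rpow_le_rpow (by positivity) (two_rpow_ceil_logb_lt ht).le hρ

end CeilLogb

section Campbell

variable {X : Type*} [Fintype X] {P : X → ℝ} {α ρ : ℝ}

noncomputable def campbellLength (P : X → ℝ) (α : ℝ) (x : X) : ℤ :=
  ⌈logb 2 ((∑ y, P y ^ α) / P x ^ α)⌉

lemma campbell_ratio_pos (hP : ∀ x, 0 < P x) (x : X) : 0 < (∑ y, P y ^ α) / P x ^ α :=
  div_pos (sum_pos' (fun y _ => (rpow_pos_of_pos (hP y) α).le)
    ⟨x, mem_univ x, rpow_pos_of_pos (hP x) α⟩) (rpow_pos_of_pos (hP x) α)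

lemma sum_two_rpow_neg_campbellLength_le_one (hP : ∀ x, 0 < P x) :
    ∑ x, (2 : ℝ) ^ (-(campbellLength P α x : ℝ)) ≤ 1 :=
  calc ∑ x, (2 : ℝ) ^ (-(campbellLength P α x : ℝ))
      ≤ ∑ x, ((∑ y, P y ^ α) / P x ^ α)⁻¹ :=
        sum_le_sum fun x _ => two_rpow_neg_ceil_logb_le (campbell_ratio_pos hP x)
    _ = (∑ y, P y ^ α) / ∑ y, P y ^ α := by simp only [inv_div]; rw [sum_div]
    _ ≤ 1 := div_self_le_one _

lemma mul_div_rpow_rpow_eq {p : ℝ} (hp : 0 < p) {Z : ℝ} (hZ : 0 ≤ Z) (hαρ : α * (1 + ρ) = 1) :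
    p * (Z / p ^ α) ^ ρ = Z ^ ρ * p ^ α := by
  have hαρ' : α * ρ = 1 - α := by linarith
  rw [div_rpow hZ (rpow_nonneg hp.le α), ← rpow_mul hp.le, hαρ', rpow_sub hp, rpow_one]
  field_simp

variable (hP : ∀ x, 0 < P x) (hρ : 0 ≤ ρ) (hαρ : α * (1 + ρ) = 1)
include hP hρ hαρ

lemma sum_mul_rpow_campbell_ratio :
    ∑ x, P x * ((∑ y, P y ^ α) / P x ^ α) ^ ρ = (∑ y, P y ^ α) ^ (1 + ρ) := by
  have hZ : 0 ≤ ∑ y, P y ^ α := sum_nonneg fun y _ => (rpow_pos_of_pos (hP y) α).le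
  rw [rpow_add' hZ (by linarith), rpow_one, mul_comm, mul_sum]
  exact sum_congr rfl fun x _ => mul_div_rpow_rpow_eq (hP x) hZ hαρ

lemma rpow_one_add_le_sum_mul_two_rpow_campbellLength :
    (∑ x, P x ^ α) ^ (1 + ρ) ≤ ∑ x, P x * (2 : ℝ) ^ (ρ * campbellLength P α x) := by
  rw [← sum_mul_rpow_campbell_ratio hP hρ hαρ]
  exact sum_le_sum fun x _ => mul_le_mul_of_nonneg_left
    (rpow_le_two_rpow_mul_ceil_logb (campbell_ratio_pos hP x) hρ) (hP x).le

lemma sum_mul_two_rpow_campbellLength_le :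
    ∑ x, P x * (2 : ℝ) ^ (ρ * campbellLength P α x) ≤ 2 ^ ρ * (∑ x, P x ^ α) ^ (1 + ρ) := by
  rw [← sum_mul_rpow_campbell_ratio hP hρ hαρ, mul_sum]
  refine sum_le_sum fun x _ => ?_
  calc P x * (2 : ℝ) ^ (ρ * campbellLength P α x)
      ≤ P x * (2 ^ ρ * ((∑ y, P y ^ α) / P x ^ α) ^ ρ) := mul_le_mul_of_nonneg_left
        (two_rpow_mul_ceil_logb_le (campbell_ratio_pos hP x) hρ) (hP x).le
    _ = 2 ^ ρ * (P x * ((∑ y, P y ^ α) / P x ^ α) ^ ρ) := by ring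

end Campbell

lemma logb_bounds_of_rpow_sandwich {Z S ρ : ℝ} (hZ : 0 < Z) (hρ : 0 < ρ)
    (hlow : Z ^ (1 + ρ) ≤ S) (hup : S ≤ 2 ^ ρ * Z ^ (1 + ρ)) :
    (1 + ρ) / ρ * logb 2 Z ≤ 1 / ρ * logb 2 S ∧
      1 / ρ * logb 2 S ≤ (1 + ρ) / ρ * logb 2 Z + 1 := by
  have hZρ : 0 < Z ^ (1 + ρ) := rpow_pos_of_pos hZ _
  have hlogZρ : logb 2 (Z ^ (1 + ρ)) = (1 + ρ) * logb 2 Z := logb_rpow_eq_mul_logb_of_pos hZ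
  have hlow' := logb_le_logb_of_le one_lt_two hZρ hlow
  have hup' := logb_le_logb_of_le one_lt_two (hZρ.trans_le hlow) hup
  rw [logb_mul (by positivity) hZρ.ne', logb_rpow two_pos (by norm_num)] at hup'
  rw [hlogZρ] at hlow' hup'
  constructor
  · rw [div_mul_eq_mul_div, one_div_mul_eq_div]
    exact div_le_div_of_nonneg_right hlow' hρ.le
  · have hrhs : (1 + ρ) / ρ * logb 2 Z + 1 = (ρ + (1 + ρ) * logb 2 Z) / ρ := by
      field_simp; ring
    rw [hrhs, one_div_mul_eq_div]
    exact div_le_div_of_nonneg_right hup' hρ.le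

theorem stmt7 {X : Type*} [Fintype X]
    (P : X → ℝ) (hP : ∀ x, 0 < P x) (hPsum : ∑ x, P x = 1)
    (ρ : ℝ) (hρ : 0 < ρ) (α : ℝ) (hα : α = 1 / (1 + ρ))
    (Z : ℝ) (hZ : Z = ∑ x, P x ^ α)
    (L : X → ℤ) (hL : ∀ x, L x = ⌈Real.logb 2 (Z / P x ^ α)⌉) :
    (∑ x, (2 : ℝ) ^ (-(L x : ℝ)) ≤ 1) ∧
    (1 / (1 - α)) * Real.logb 2 (∑ x, P x ^ α) ≤
      (1 / ρ) * Real.logb 2 (∑ x, P x * (2 : ℝ) ^ (ρ * (L x : ℝ))) ∧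
    (1 / ρ) * Real.logb 2 (∑ x, P x * (2 : ℝ) ^ (ρ * (L x : ℝ))) ≤
      (1 / (1 - α)) * Real.logb 2 (∑ x, P x ^ α) + 1 := by
  subst hZ
  obtain rfl : L = campbellLength P α := funext hL
  obtain ⟨x₀⟩ : Nonempty X := by
    by_contra h
    simp [not_nonempty_iff.mp h] at hPsum
  have hαρ : α * (1 + ρ) = 1 := by rw [hα]; field_simp
  have hcoef : 1 / (1 - α) = (1 + ρ) / ρ := by
    have h1ρ : 1 + ρ ≠ 0 := by linarith
    rw [hα, one_sub_div h1ρ, add_sub_cancel_left, one_div_div]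
  have hZ : 0 < ∑ x, P x ^ α := sum_pos (fun x _ => rpow_pos_of_pos (hP x) α) ⟨x₀, mem_univ x₀⟩
  rw [hcoef]
  exact ⟨sum_two_rpow_neg_campbellLength_le_one hP, logb_bounds_of_rpow_sandwich hZ hρ
    (rpow_one_add_le_sum_mul_two_rpow_campbellLength hP hρ.le hαρ)
    (sum_mul_two_rpow_campbellLength_le hP hρ.le hαρ)⟩
end

section
/- Let X be a finite set, P a probability distribution on X with full support, ρ > 0, α = 1/(1+ρ), and L : X → ℕ an arbitrary length function. Define Q_L(x) = 2^{-L(x)/α} / ∑_{x'} 2^{-L(x')/α} and η = ∑_{x} 2^{-L(x)}. Then (1/ρ)·log(∑_x P(x)·2^{ρ·L(x)}) = H_α(P) + I_α(P, Q_L) − log η. -/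
open Real Finset

/-!
Writing `Q_L(x) ∝ 2^{-L(x)/α}`, the ratios `(Q_L(x')/Q_L(x))^α = 2^{L(x) - L(x')}` no longer see the
normaliser, so `∑_{x'} (Q_L(x')/Q_L(x))^α = 2^{L(x)} η`. Raising to `(1-α)/α = ρ` turns the
Sundaresan sum into `η^ρ ∑_x P(x) 2^{ρ L(x)}`; since `α/(1-α) = 1/ρ`, its logarithm is the normalised
cumulant plus `log η`, and the two Rényi entropy terms cancel.
-/

section TiltedDistribution

variable {X : Type*} [Fintype X] {b α : ℝ}

lemma rpow_div_rpow_rpow_of_ne_zero (hb : 0 < b) (hα : α ≠ 0) (s t : ℝ) :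
    (b ^ (s / α) / b ^ (t / α)) ^ α = b ^ (s - t) := by
  rw [← rpow_sub hb, ← sub_div, ← rpow_mul hb.le, div_mul_cancel₀ _ hα]

variable [Nonempty X]

lemma sum_rpow_tilted_ratio (hb : 0 < b) (hα : α ≠ 0) (L Q : X → ℝ)
    (hQ : ∀ x, Q x = b ^ (-L x / α) / ∑ x', b ^ (-L x' / α)) (x : X) :
    ∑ x', (Q x' / Q x) ^ α = b ^ L x * ∑ x', b ^ (-L x') := by
  have hD : ∑ x', b ^ (-L x' / α) ≠ 0 :=
    (sum_pos (fun _ _ => rpow_pos_of_pos hb _) univ_nonempty).ne'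
  rw [mul_sum]
  refine sum_congr rfl fun x' _ => ?_
  rw [hQ, hQ, div_div_div_cancel_right₀ hD, rpow_div_rpow_rpow_of_ne_zero hb hα, ← rpow_add hb]
  ring_nf

lemma sum_mul_rpow_sum_rpow_tilted_ratio (hb : 0 < b) (hα : α ≠ 0) (P L Q : X → ℝ)
    (hQ : ∀ x, Q x = b ^ (-L x / α) / ∑ x', b ^ (-L x' / α)) :
    ∑ x, P x * (∑ x', (Q x' / Q x) ^ α) ^ ((1 - α) / α) =
      (∑ x, b ^ (-L x)) ^ ((1 - α) / α) * ∑ x, P x * b ^ ((1 - α) / α * L x) := by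
  have hη : 0 ≤ ∑ x, b ^ (-L x) := sum_nonneg fun _ _ => (rpow_pos_of_pos hb _).le
  rw [mul_sum]
  refine sum_congr rfl fun x _ => ?_
  rw [sum_rpow_tilted_ratio hb hα L Q hQ, mul_rpow (rpow_nonneg hb.le _) hη, ← rpow_mul hb.le]
  ring_nf

end TiltedDistribution

theorem stmt8_general {X : Type*} [Fintype X] [Nonempty X]
    (P : X → ℝ) (hP : ∀ x, 0 < P x)
    (ρ : ℝ) (hρ : 0 < ρ) (α : ℝ) (hα : α = 1 / (1 + ρ))
    (L : X → ℕ)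
    (QL : X → ℝ)
    (hQL : ∀ x, QL x = (2 : ℝ) ^ (-(L x : ℝ) / α) /
        ∑ x', (2 : ℝ) ^ (-(L x' : ℝ) / α))
    (η : ℝ) (hη : η = ∑ x, (2 : ℝ) ^ (-(L x : ℝ))) :
    (1 / ρ) * Real.logb 2 (∑ x, P x * (2 : ℝ) ^ (ρ * (L x : ℝ))) =
      (1 / (1 - α)) * Real.logb 2 (∑ x, P x ^ α)
      + ((α / (1 - α)) * Real.logb 2
          (∑ x, P x * (∑ x', (QL x' / QL x) ^ α) ^ ((1 - α) / α))
        - (1 / (1 - α)) * Real.logb 2 (∑ x, P x ^ α))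
      - Real.logb 2 η := by
  have hα0 : α ≠ 0 := by rw [hα]; positivity
  have hexp : (1 - α) / α = ρ := by rw [hα]; field_simp; ring
  have hcoef : α / (1 - α) = 1 / ρ := by rw [← hexp, one_div_div]
  have hη0 : 0 < η := hη ▸ sum_pos (fun _ _ => by positivity) univ_nonempty
  have hS : 0 < ∑ x, P x * (2 : ℝ) ^ (ρ * (L x : ℝ)) :=
    sum_pos (fun x _ => mul_pos (hP x) (by positivity)) univ_nonempty
  rw [sum_mul_rpow_sum_rpow_tilted_ratio two_pos hα0 P _ QL hQL, hexp, ← hη, hcoef,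
    logb_mul (by positivity) hS.ne', logb_rpow_eq_mul_logb_of_pos hη0]
  field_simp
  ring

theorem stmt8 {X : Type*} [Fintype X] [Nonempty X]
    (P : X → ℝ) (hP : ∀ x, 0 < P x) (hPsum : ∑ x, P x = 1)
    (ρ : ℝ) (hρ : 0 < ρ) (α : ℝ) (hα : α = 1 / (1 + ρ))
    (L : X → ℕ)
    (QL : X → ℝ)
    (hQL : ∀ x, QL x = (2 : ℝ) ^ (-(L x : ℝ) / α) /
        ∑ x', (2 : ℝ) ^ (-(L x' : ℝ) / α))
    (η : ℝ) (hη : η = ∑ x, (2 : ℝ) ^ (-(L x : ℝ))) :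
    (1 / ρ) * Real.logb 2 (∑ x, P x * (2 : ℝ) ^ (ρ * (L x : ℝ))) =
      (1 / (1 - α)) * Real.logb 2 (∑ x, P x ^ α)
      + ((α / (1 - α)) * Real.logb 2
          (∑ x, P x * (∑ x', (QL x' / QL x) ^ α) ^ ((1 - α) / α))
        - (1 / (1 - α)) * Real.logb 2 (∑ x, P x ^ α))
      - Real.logb 2 η :=
  stmt8_general P hP ρ hρ α hα L QL hQL η hη
end

section
/- Let X be a finite set with |X| = m ≥ 1, P a probability distribution on X with full support, and G : X → {1, …, m} a bijection (guessing function). Then for ρ ∈ (-1,0) ∪ (0,∞) and α = 1/(1+ρ), (1/ρ)·log(∑_{x∈X} P(x)·G(x)^ρ) ≥ H_α(P) − log(1 + ln m), where H_α(P) = (1/(1-α)) log ∑_x P(x)^α, log is base 2, and ln is the natural logarithm. -/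
open Real Finset

/-!
The summand `P ^ α` of the Rényi sum factors as `(P G ^ ρ) ^ α (1 / G) ^ (1 - α)`, so Hölder's
inequality bounds `∑ P ^ α` by a power of the moment `∑ P G ^ ρ` times a power of `∑ 1 / G`
(for `ρ < 0` the roles are swapped: `P G ^ ρ = (P ^ α) ^ (1 + ρ) (1 / G) ^ (-ρ)`). As `G` is
injective into `{1, …, m}`, `∑ 1 / G` is at most the harmonic number `H_m ≤ 1 + ln m`.
-/

lemma Real.sum_rpow_mul_rpow_one_sub_le_s9 {ι : Type*} (s : Finset ι) {a b : ι → ℝ}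
    (ha : ∀ i ∈ s, 0 ≤ a i) (hb : ∀ i ∈ s, 0 ≤ b i) {θ : ℝ} (hθ₀ : 0 < θ) (hθ₁ : θ < 1) :
    ∑ i ∈ s, a i ^ θ * b i ^ (1 - θ) ≤ (∑ i ∈ s, a i) ^ θ * (∑ i ∈ s, b i) ^ (1 - θ) := by
  have h := inner_le_Lp_mul_Lq_of_nonneg s (HolderConjugate.inv_one_sub_inv hθ₀ hθ₁)
    (fun i hi => rpow_nonneg (ha i hi) θ) (fun i hi => rpow_nonneg (hb i hi) (1 - θ))
  rwa [sum_congr rfl fun i hi => rpow_rpow_inv (ha i hi) hθ₀.ne',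
    sum_congr rfl fun i hi => rpow_rpow_inv (hb i hi) (sub_pos.mpr hθ₁).ne',
    one_div, one_div, inv_inv, inv_inv] at h

lemma Real.log_sum_rpow_mul_rpow_one_sub_le {ι : Type*} [Fintype ι] [Nonempty ι] {a b : ι → ℝ}
    (ha : ∀ i, 0 < a i) (hb : ∀ i, 0 < b i) {θ : ℝ} (hθ₀ : 0 < θ) (hθ₁ : θ < 1) :
    log (∑ i, a i ^ θ * b i ^ (1 - θ)) ≤ θ * log (∑ i, a i) + (1 - θ) * log (∑ i, b i) := by
  have hA : 0 < ∑ i, a i := sum_pos (fun i _ => ha i) univ_nonempty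
  have hB : 0 < ∑ i, b i := sum_pos (fun i _ => hb i) univ_nonempty
  have hS : 0 < ∑ i, a i ^ θ * b i ^ (1 - θ) :=
    sum_pos (fun i _ => mul_pos (rpow_pos_of_pos (ha i) θ) (rpow_pos_of_pos (hb i) _))
      univ_nonempty
  calc log (∑ i, a i ^ θ * b i ^ (1 - θ))
      ≤ log ((∑ i, a i) ^ θ * (∑ i, b i) ^ (1 - θ)) :=
        log_le_log hS <| sum_rpow_mul_rpow_one_sub_le_s9 _ (fun i _ => (ha i).le)
          (fun i _ => (hb i).le) hθ₀ hθ₁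
    _ = θ * log (∑ i, a i) + (1 - θ) * log (∑ i, b i) := by
        rw [log_mul (rpow_pos_of_pos hA _).ne' (rpow_pos_of_pos hB _).ne', log_rpow hA,
          log_rpow hB]

theorem sum_inv_le_harmonic {X : Type*} [Fintype X] {m : ℕ} {G : X → ℕ}
    (hG : ∀ x, G x ∈ Icc 1 m) (hGinj : Function.Injective G) :
    ∑ x, ((G x : ℝ))⁻¹ ≤ harmonic m := by
  rw [harmonic_eq_sum_Icc, Rat.cast_sum,
    ← sum_image (f := fun i : ℕ => ((i : ℝ))⁻¹) fun x _ y _ h => hGinj h]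
  push_cast
  exact sum_le_sum_of_subset_of_nonneg (by simpa [Finset.subset_iff] using hG)
    fun i _ _ => by positivity

theorem log_sum_mul_rpow_lower_bound {ι : Type*} [Fintype ι] [Nonempty ι] {p g : ι → ℝ}
    (hp : ∀ i, 0 < p i) (hg : ∀ i, 0 < g i) {ρ : ℝ} (hρ : -1 < ρ) (hρ₀ : ρ ≠ 0) :
    (1 + ρ) / ρ * log (∑ i, p i ^ (1 / (1 + ρ))) - log (∑ i, (g i)⁻¹) ≤
      1 / ρ * log (∑ i, p i * g i ^ ρ) := by
  have h1ρ : 0 < 1 + ρ := by linarith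
  set α := 1 / (1 + ρ) with hα
  have hαρ : α * (1 + ρ) = 1 := by rw [hα]; field_simp
  have hginv : ∀ i, 0 < (g i)⁻¹ := fun i => inv_pos.mpr (hg i)
  rcases hρ₀.lt_or_gt with hneg | hpos
  · have hfactor : ∀ i, (p i ^ α) ^ (1 + ρ) * (g i)⁻¹ ^ (1 - (1 + ρ)) = p i * g i ^ ρ := fun i => by
      rw [← rpow_mul (hp i).le, hαρ, rpow_one, inv_rpow (hg i).le, ← rpow_neg (hg i).le]
      ring_nf
    have h := log_sum_rpow_mul_rpow_one_sub_le (fun i => rpow_pos_of_pos (hp i) α) hginv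
      h1ρ (by linarith)
    simp only [hfactor] at h
    have hrescale : 1 / ρ * ((1 + ρ) * log (∑ i, p i ^ α) + (1 - (1 + ρ)) * log (∑ i, (g i)⁻¹)) =
        (1 + ρ) / ρ * log (∑ i, p i ^ α) - log (∑ i, (g i)⁻¹) := by
      field_simp; ring
    linarith [mul_le_mul_of_nonpos_left h (one_div_neg.mpr hneg).le]
  · have hfactor : ∀ i, (p i * g i ^ ρ) ^ α * (g i)⁻¹ ^ (1 - α) = p i ^ α := fun i => by
      rw [mul_rpow (hp i).le (rpow_nonneg (hg i).le ρ), ← rpow_mul (hg i).le,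
        inv_rpow (hg i).le, ← rpow_neg (hg i).le, mul_assoc, ← rpow_add (hg i),
        show ρ * α + -(1 - α) = 0 by linear_combination hαρ, rpow_zero, mul_one]
    have h := log_sum_rpow_mul_rpow_one_sub_le
      (fun i => mul_pos (hp i) (rpow_pos_of_pos (hg i) ρ)) hginv (θ := α)
      (by positivity) (by rw [hα, div_lt_one h1ρ]; linarith)
    simp only [hfactor] at h
    have hrescale : (1 + ρ) / ρ * (α * log (∑ i, p i * g i ^ ρ) + (1 - α) * log (∑ i, (g i)⁻¹)) =
        1 / ρ * log (∑ i, p i * g i ^ ρ) + log (∑ i, (g i)⁻¹) := by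
      rw [hα]; field_simp; ring
    linarith [mul_le_mul_of_nonneg_left h (div_pos h1ρ hpos).le]

theorem stmt9_general {X : Type*} [Fintype X]
    (m : ℕ) (hm : Fintype.card X = m) (hm1 : 1 ≤ m)
    (P : X → ℝ) (hP : ∀ x, 0 < P x)
    (G : X → ℕ) (hGmem : ∀ x, G x ∈ Finset.Icc 1 m)
    (hGinj : Function.Injective G)
    (ρ : ℝ) (hρ : ρ ∈ Set.Ioo (-1 : ℝ) 0 ∪ Set.Ioi (0 : ℝ))
    (α : ℝ) (hα : α = 1 / (1 + ρ)) :
    (1 / ρ) * Real.logb 2 (∑ x, P x * (G x : ℝ) ^ ρ) ≥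
      (1 / (1 - α)) * Real.logb 2 (∑ x, P x ^ α)
        - Real.logb 2 (1 + Real.log m) := by
  have : Nonempty X := Fintype.card_pos_iff.mp (hm ▸ hm1)
  obtain ⟨hρ₁, hρ₀⟩ : -1 < ρ ∧ ρ ≠ 0 := by
    rcases hρ with ⟨h₁, h₀⟩ | h
    · exact ⟨h₁, h₀.ne⟩
    · exact ⟨by linarith [Set.mem_Ioi.mp h], (Set.mem_Ioi.mp h).ne'⟩
  have hG : ∀ x, (0 : ℝ) < G x := fun x => by exact_mod_cast (mem_Icc.mp (hGmem x)).1
  have hharm : log (∑ x, ((G x : ℝ))⁻¹) ≤ log (1 + log m) :=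
    log_le_log (sum_pos (fun x _ => inv_pos.mpr (hG x)) univ_nonempty)
      ((sum_inv_le_harmonic hGmem hGinj).trans (harmonic_le_one_add_log m))
  have hbound := log_sum_mul_rpow_lower_bound hP hG hρ₁ hρ₀
  have hα' : 1 / (1 - 1 / (1 + ρ)) = (1 + ρ) / ρ := by
    rw [one_sub_div (by linarith), add_sub_cancel_left, one_div_div]
  rw [ge_iff_le, hα, hα']
  simp only [logb, ← mul_div_assoc, ← sub_div]
  gcongr
  linarith

theorem stmt9 {X : Type*} [Fintype X]
    (m : ℕ) (hm : Fintype.card X = m) (hm1 : 1 ≤ m)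
    (P : X → ℝ) (hP : ∀ x, 0 < P x) (hPsum : ∑ x, P x = 1)
    (G : X → ℕ) (hGmem : ∀ x, G x ∈ Finset.Icc 1 m)
    (hGinj : Function.Injective G)
    (ρ : ℝ) (hρ : ρ ∈ Set.Ioo (-1 : ℝ) 0 ∪ Set.Ioi (0 : ℝ))
    (α : ℝ) (hα : α = 1 / (1 + ρ)) :
    (1 / ρ) * Real.logb 2 (∑ x, P x * (G x : ℝ) ^ ρ) ≥
      (1 / (1 - α)) * Real.logb 2 (∑ x, P x ^ α)
        - Real.logb 2 (1 + Real.log m) :=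
  stmt9_general m hm hm1 P hP G hGmem hGinj ρ hρ α hα
end

section
/- Let X be a finite set with |X| = m, P a probability distribution on X with full support, and G* : X → {1,…,m} a bijection such that G*(x) < G*(y) implies P(x) ≥ P(y) (guessing in non-increasing order of probabilities). Then for any ρ > 0 and α = 1/(1+ρ), (1/ρ)·log(∑_x P(x)·G*(x)^ρ) ≤ H_α(P), where H_α(P) = (1/(1-α)) log ∑_x P(x)^α with base-2 logarithm. -/
/-!
Let `S = ∑ₓ P(x)^α`. Since `G` guesses in non-increasing order of probability, each of the
`G(x)` elements guessed no later than `x` has `P(y)^α ≥ P(x)^α`, so `G(x) ≤ S / P(x)^α`.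
Raising this to the power `ρ` and using `P(x) = P(x)^α · P(x)^(αρ)` gives
`P(x) G(x)^ρ ≤ S^ρ P(x)^α`; summing over `x` yields `∑ₓ P(x) G(x)^ρ ≤ S^(1+ρ)`, and taking
logarithms gives the claim, as `(1 + ρ) / ρ = 1 / (1 - α)`.
-/

open Real Finset

section Ranking

variable {X : Type*} [Fintype X] {m : ℕ} {G : X → ℕ}

theorem image_univ_eq_Icc_of_injective (hm : Fintype.card X = m)
    (hGmem : ∀ x, G x ∈ Icc 1 m) (hGinj : Function.Injective G) :
    univ.image G = Icc 1 m := by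
  refine eq_of_subset_of_card_le (fun n hn => ?_) ?_
  · obtain ⟨x, -, rfl⟩ := mem_image.mp hn
    exact hGmem x
  · rw [card_image_of_injective _ hGinj, card_univ, hm, Nat.card_Icc, Nat.add_sub_cancel]

theorem le_card_filter_le_of_image_univ_eq_Icc (hG : univ.image G = Icc 1 m) (x : X) :
    G x ≤ #{y | G y ≤ G x} := by
  have hGx : G x ∈ Icc 1 m := hG ▸ mem_image_of_mem G (mem_univ x)
  have hsub : Icc 1 (G x) ⊆ image G {y | G y ≤ G x} := by
    intro n hn
    obtain ⟨hn1, hnx⟩ := mem_Icc.mp hn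
    have : n ∈ univ.image G := hG ▸ mem_Icc.mpr ⟨hn1, hnx.trans (mem_Icc.mp hGx).2⟩
    obtain ⟨y, -, rfl⟩ := mem_image.mp this
    exact mem_image_of_mem G (mem_filter.mpr ⟨mem_univ y, hnx⟩)
  calc G x = #(Icc 1 (G x)) := by rw [Nat.card_Icc, Nat.add_sub_cancel]
    _ ≤ #(image G {y | G y ≤ G x}) := card_le_card hsub
    _ ≤ #{y | G y ≤ G x} := card_image_le

theorem card_filter_le_mul_le_sum (w : X → ℝ) (hw : ∀ x, 0 ≤ w x)
    (hGinj : Function.Injective G) (hGmono : ∀ x y, G x < G y → w y ≤ w x) (x : X) :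
    (#{y | G y ≤ G x} : ℝ) * w x ≤ ∑ y, w y := by
  rw [← nsmul_eq_mul, ← sum_const]
  calc ∑ _y ∈ {y | G y ≤ G x}, w x ≤ ∑ y ∈ {y | G y ≤ G x}, w y := by
        refine sum_le_sum fun y hy => ?_
        rcases (mem_filter.mp hy).2.lt_or_eq with hlt | heq
        · exact hGmono y x hlt
        · rw [hGinj heq]
    _ ≤ ∑ y, w y := sum_le_sum_of_subset_of_nonneg (subset_univ _) fun y _ _ => hw y

end Ranking

theorem mul_rpow_le_rpow_mul_of_mul_rpow_le {p g S ρ : ℝ} (hp : 0 < p) (hg : 0 ≤ g)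
    (hρ : 0 ≤ ρ) (h : g * p ^ (1 / (1 + ρ)) ≤ S) :
    p * g ^ ρ ≤ S ^ ρ * p ^ (1 / (1 + ρ)) := by
  set α := 1 / (1 + ρ)
  have hsplit : p = p ^ α * (p ^ α) ^ ρ := by
    rw [← rpow_mul hp.le, ← rpow_add hp, ← mul_one_add, one_div_mul_cancel (by positivity),
      rpow_one]
  calc p * g ^ ρ = (g * p ^ α) ^ ρ * p ^ α := by
        rw [mul_rpow hg (by positivity)]
        nth_rewrite 1 [hsplit]
        ring
    _ ≤ S ^ ρ * p ^ α := by gcongr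

theorem sum_mul_rpow_le_of_guessing_order {X : Type*} [Fintype X] {m : ℕ}
    (hm : Fintype.card X = m) (P : X → ℝ) (hP : ∀ x, 0 < P x)
    (G : X → ℕ) (hGmem : ∀ x, G x ∈ Icc 1 m) (hGinj : Function.Injective G)
    (hGmono : ∀ x y, G x < G y → P y ≤ P x) {ρ : ℝ} (hρ : 0 ≤ ρ) :
    ∑ x, P x * (G x : ℝ) ^ ρ ≤ (∑ x, P x ^ (1 / (1 + ρ))) ^ (1 + ρ) := by
  set S := ∑ x, P x ^ (1 / (1 + ρ))
  have hPα (x : X) : 0 ≤ P x ^ (1 / (1 + ρ)) := rpow_nonneg (hP x).le _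
  have hS : 0 ≤ S := sum_nonneg fun x _ => hPα x
  have hrank := le_card_filter_le_of_image_univ_eq_Icc
    (image_univ_eq_Icc_of_injective hm hGmem hGinj)
  have hG_mul_le (x : X) : (G x : ℝ) * P x ^ (1 / (1 + ρ)) ≤ S :=
    le_trans (mul_le_mul_of_nonneg_right (by exact_mod_cast hrank x) (hPα x))
      (card_filter_le_mul_le_sum _ hPα hGinj
        (fun x y h => rpow_le_rpow (hP y).le (hGmono x y h) (by positivity)) x)
  calc ∑ x, P x * (G x : ℝ) ^ ρ ≤ ∑ x, S ^ ρ * P x ^ (1 / (1 + ρ)) :=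
        sum_le_sum fun x _ =>
          mul_rpow_le_rpow_mul_of_mul_rpow_le (hP x) (Nat.cast_nonneg _) hρ (hG_mul_le x)
    _ = S ^ (1 + ρ) := by rw [← mul_sum, rpow_add' hS (by positivity), rpow_one, mul_comm]

theorem stmt10_general {X : Type*} [Fintype X]
    (m : ℕ) (hm : Fintype.card X = m)
    (P : X → ℝ) (hP : ∀ x, 0 < P x)
    (G : X → ℕ) (hGmem : ∀ x, G x ∈ Finset.Icc 1 m)
    (hGinj : Function.Injective G)
    (hGmono : ∀ x y, G x < G y → P y ≤ P x)
    (ρ : ℝ) (hρ : 0 < ρ) (α : ℝ) (hα : α = 1 / (1 + ρ)) :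
    (1 / ρ) * Real.logb 2 (∑ x, P x * (G x : ℝ) ^ ρ) ≤
      (1 / (1 - α)) * Real.logb 2 (∑ x, P x ^ α) := by
  subst hα
  rcases isEmpty_or_nonempty X with hX | hX
  · simp
  have hGpos (x : X) : (0 : ℝ) < G x := by exact_mod_cast (mem_Icc.mp (hGmem x)).1
  have hL : 0 < ∑ x, P x * (G x : ℝ) ^ ρ :=
    sum_pos (fun x _ => mul_pos (hP x) (rpow_pos_of_pos (hGpos x) ρ)) univ_nonempty
  have hS : 0 < ∑ x, P x ^ (1 / (1 + ρ)) :=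
    sum_pos (fun x _ => rpow_pos_of_pos (hP x) _) univ_nonempty
  calc (1 / ρ) * logb 2 (∑ x, P x * (G x : ℝ) ^ ρ)
      ≤ (1 / ρ) * logb 2 ((∑ x, P x ^ (1 / (1 + ρ))) ^ (1 + ρ)) := by
        gcongr
        · norm_num
        · exact sum_mul_rpow_le_of_guessing_order hm P hP G hGmem hGinj hGmono hρ.le
    _ = (1 / (1 - 1 / (1 + ρ))) * logb 2 (∑ x, P x ^ (1 / (1 + ρ))) := by
        have hcoef : 1 / (1 - 1 / (1 + ρ)) = 1 / ρ * (1 + ρ) := by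
          rw [one_sub_div (by positivity), add_sub_cancel_left, one_div_div, div_eq_inv_mul,
            one_div]
        rw [logb_rpow_eq_mul_logb_of_pos hS, hcoef, mul_assoc]

theorem stmt10 {X : Type*} [Fintype X]
    (m : ℕ) (hm : Fintype.card X = m)
    (P : X → ℝ) (hP : ∀ x, 0 < P x) (hPsum : ∑ x, P x = 1)
    (G : X → ℕ) (hGmem : ∀ x, G x ∈ Finset.Icc 1 m)
    (hGinj : Function.Injective G)
    (hGmono : ∀ x y, G x < G y → P y ≤ P x)
    (ρ : ℝ) (hρ : 0 < ρ) (α : ℝ) (hα : α = 1 / (1 + ρ)) :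
    (1 / ρ) * Real.logb 2 (∑ x, P x * (G x : ℝ) ^ ρ) ≤
      (1 / (1 - α)) * Real.logb 2 (∑ x, P x ^ α) :=
  stmt10_general m hm P hP G hGmem hGinj hGmono ρ hρ α hα
end

section
/- Let X be a finite set with |X| = m, P a probability distribution on X with full support, ρ ∈ (0,∞), α = 1/(1+ρ), and G : X → {1,…,m} an arbitrary bijection. Define Q_G(x) = G(x)^{-1/α} / ∑_{x'} G(x')^{-1/α}. Then (1/ρ)·log(∑_x P(x)·G(x)^ρ) ≥ H_α(P) + I_α(P, Q_G) − log(1 + ln m). -/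
/-!
Since `(Q_G(x') / Q_G(x))^α = G(x) / G(x')`, the inner sum in `I_α(P, Q_G)` is `G(x) · C` with
`C = ∑ 1 / G(x') = H_m` (the `m`-th harmonic number, `G` being a bijection onto `{1, …, m}`).
Hence `H_α(P) + I_α(P, Q_G) = (1/ρ) log ∑ P(x) G(x)^ρ + log C` exactly, and `H_m ≤ 1 + ln m`.
-/

open Real Finset

lemma sum_inv_eq_harmonic {X : Type*} [Fintype X] {m : ℕ} (hm : Fintype.card X = m)
    {G : X → ℕ} (hGmem : ∀ x, G x ∈ Icc 1 m) (hGinj : Function.Injective G) :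
    ∑ x, ((G x : ℝ))⁻¹ = harmonic m := by
  have himage : univ.image G = Icc 1 m :=
    eq_of_subset_of_card_le (image_subset_iff.2 fun x _ => hGmem x)
      (by rw [card_image_of_injective _ hGinj, card_univ, hm, Nat.card_Icc]; omega)
  rw [harmonic_eq_sum_Icc, ← himage, sum_image fun x _ y _ h => hGinj h]
  push_cast
  rfl

lemma rpow_neg_inv_div_rpow_neg_inv_rpow {a b α : ℝ} (ha : 0 < a) (hb : 0 < b) (hα : α ≠ 0) :
    (b ^ (-(1 / α)) / a ^ (-(1 / α))) ^ α = a / b := by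
  have hexp : -(1 / α) * α = -1 := by field_simp
  rw [div_rpow (rpow_nonneg hb.le _) (rpow_nonneg ha.le _), ← rpow_mul hb.le, ← rpow_mul ha.le,
    hexp, rpow_neg_one, rpow_neg_one, div_inv_eq_mul, inv_mul_eq_div]

lemma sum_div_rpow_eq_mul_sum_inv {X : Type*} [Fintype X] {g : X → ℝ} (hg : ∀ x, 0 < g x)
    {α : ℝ} (hα : α ≠ 0) {Q : X → ℝ}
    (hQ : ∀ x, Q x = g x ^ (-(1 / α)) / ∑ x', g x' ^ (-(1 / α))) (x : X) :
    ∑ x', (Q x' / Q x) ^ α = g x * ∑ x', (g x')⁻¹ := by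
  have hZ : ∑ x', g x' ^ (-(1 / α)) ≠ 0 :=
    (sum_pos (fun y _ => rpow_pos_of_pos (hg y) _) ⟨x, mem_univ x⟩).ne'
  rw [mul_sum]
  refine sum_congr rfl fun x' _ => ?_
  rw [hQ, hQ, div_div_div_cancel_right₀ hZ,
    rpow_neg_inv_div_rpow_neg_inv_rpow (hg x) (hg x') hα, div_eq_mul_inv]

lemma one_div_mul_logb_rpow_mul {b C T ρ : ℝ} (hC : 0 < C) (hT : T ≠ 0) (hρ : ρ ≠ 0) :
    1 / ρ * logb b (C ^ ρ * T) = logb b C + 1 / ρ * logb b T := by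
  rw [logb_mul (rpow_pos_of_pos hC ρ).ne' hT, logb_rpow_eq_mul_logb_of_pos hC]
  field_simp

theorem stmt12_general {X : Type*} [Fintype X]
    (m : ℕ) (hm : Fintype.card X = m)
    (P : X → ℝ) (hP : ∀ x, 0 < P x)
    (ρ : ℝ) (hρ : 0 < ρ) (α : ℝ) (hα : α = 1 / (1 + ρ))
    (G : X → ℕ) (hGmem : ∀ x, G x ∈ Finset.Icc 1 m)
    (hGinj : Function.Injective G)
    (QG : X → ℝ)
    (hQG : ∀ x, QG x = (G x : ℝ) ^ (-(1 / α)) /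
        ∑ x', (G x' : ℝ) ^ (-(1 / α))) :
    (1 / ρ) * Real.logb 2 (∑ x, P x * (G x : ℝ) ^ ρ) ≥
      (1 / (1 - α)) * Real.logb 2 (∑ x, P x ^ α)
      + ((α / (1 - α)) * Real.logb 2
          (∑ x, P x * (∑ x', (QG x' / QG x) ^ α) ^ ((1 - α) / α))
        - (1 / (1 - α)) * Real.logb 2 (∑ x, P x ^ α))
      - Real.logb 2 (1 + Real.log m) := by
  obtain hX | hX := isEmpty_or_nonempty X
  · simp [← hm]
  have hα0 : α ≠ 0 := by rw [hα]; positivity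
  have hexp : (1 - α) / α = ρ := by rw [hα]; field_simp; ring
  have hcoef : α / (1 - α) = 1 / ρ := by rw [← hexp, one_div, inv_div]
  have hG : ∀ x, (0 : ℝ) < G x := fun x => Nat.cast_pos.2 (mem_Icc.1 (hGmem x)).1
  set C := ∑ x, ((G x : ℝ))⁻¹ with hCdef
  have hC : 0 < C := sum_pos (fun x _ => inv_pos.2 (hG x)) univ_nonempty
  have hT : 0 < ∑ x, P x * (G x : ℝ) ^ ρ :=
    sum_pos (fun x _ => mul_pos (hP x) (rpow_pos_of_pos (hG x) ρ)) univ_nonempty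
  have hmoment : ∑ x, P x * (∑ x', (QG x' / QG x) ^ α) ^ ((1 - α) / α)
      = C ^ ρ * ∑ x, P x * (G x : ℝ) ^ ρ := by
    rw [hexp, mul_sum]
    refine sum_congr rfl fun x _ => ?_
    rw [sum_div_rpow_eq_mul_sum_inv hG hα0 hQG x, mul_rpow (hG x).le hC.le]
    ring
  have hCle : logb 2 C ≤ logb 2 (1 + log m) :=
    logb_le_logb_of_le (by norm_num) hC <| by
      rw [hCdef, sum_inv_eq_harmonic hm hGmem hGinj]
      exact harmonic_le_one_add_log m
  rw [hmoment, hcoef, one_div_mul_logb_rpow_mul hC hT.ne' hρ.ne']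
  linarith

theorem stmt12 {X : Type*} [Fintype X]
    (m : ℕ) (hm : Fintype.card X = m)
    (P : X → ℝ) (hP : ∀ x, 0 < P x) (hPsum : ∑ x, P x = 1)
    (ρ : ℝ) (hρ : 0 < ρ) (α : ℝ) (hα : α = 1 / (1 + ρ))
    (G : X → ℕ) (hGmem : ∀ x, G x ∈ Finset.Icc 1 m)
    (hGinj : Function.Injective G)
    (QG : X → ℝ)
    (hQG : ∀ x, QG x = (G x : ℝ) ^ (-(1 / α)) /
        ∑ x', (G x' : ℝ) ^ (-(1 / α))) :
    (1 / ρ) * Real.logb 2 (∑ x, P x * (G x : ℝ) ^ ρ) ≥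
      (1 / (1 - α)) * Real.logb 2 (∑ x, P x ^ α)
      + ((α / (1 - α)) * Real.logb 2
          (∑ x, P x * (∑ x', (QG x' / QG x) ^ α) ^ ((1 - α) / α))
        - (1 / (1 - α)) * Real.logb 2 (∑ x, P x ^ α))
      - Real.logb 2 (1 + Real.log m) :=
  stmt12_general m hm P hP ρ hρ α hα G hGmem hGinj QG hQG
end

section
/- Let X be a finite set, P and Q probability distributions on X with full support, ρ > 0, α = 1/(1+ρ), and G_Q : X → {1,…,|X|} a bijection such that G_Q(x) < G_Q(y) implies Q(x) ≥ Q(y). Then (1/ρ)·log(∑_x P(x)·G_Q(x)^ρ) ≤ H_α(P) + I_α(P,Q), where H_α is the Rényi entropy of order α and I_α is Sundaresan's divergence. -/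
/-!
The entropy terms cancel, so the claim is that the `ρ`-th moment of the guesswork is at most
`∑ₓ P x (∑_{x'} (Q x' / Q x) ^ α) ^ ρ`. This holds termwise (Arikan's bound): a guess list that
lists more likely elements first reaches `x` only after the `G x` elements `y` with `G y ≤ G x`,
each of which has `Q y ≥ Q x` and so contributes at least `1` to `∑_y (Q y / Q x) ^ α`.
-/

open Real Finset

lemma le_card_filter_apply_le_of_injective {X : Type*} [Fintype X] {G : X → ℕ}
    (hGmem : ∀ x, G x ∈ Icc 1 (Fintype.card X)) (hGinj : Function.Injective G) (x : X) :
    G x ≤ #{y | G y ≤ G x} := by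
  have himage : univ.image G = Icc 1 (Fintype.card X) :=
    eq_of_subset_of_card_le (fun k hk => by obtain ⟨y, -, rfl⟩ := mem_image.1 hk; exact hGmem y)
      (by simp [card_image_of_injective _ hGinj])
  have hsub : Icc 1 (G x) ⊆ ({y | G y ≤ G x} : Finset X).image G := by
    intro k hk
    have hk' : k ∈ univ.image G := by
      rw [himage]
      exact mem_Icc.2 ⟨(mem_Icc.1 hk).1, (mem_Icc.1 hk).2.trans (mem_Icc.1 (hGmem x)).2⟩
    obtain ⟨y, -, rfl⟩ := mem_image.1 hk'
    exact mem_image.2 ⟨y, mem_filter.2 ⟨mem_univ y, (mem_Icc.1 hk).2⟩, rfl⟩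
  calc G x = #(Icc 1 (G x)) := by simp
    _ ≤ #(({y | G y ≤ G x} : Finset X).image G) := card_le_card hsub
    _ ≤ #{y | G y ≤ G x} := card_image_le

lemma natCast_le_sum_rpow_div_of_antitone_rank {X : Type*} [Fintype X] {Q : X → ℝ}
    (hQ : ∀ x, 0 < Q x) {G : X → ℕ} (hGmem : ∀ x, G x ∈ Icc 1 (Fintype.card X))
    (hGinj : Function.Injective G) (hGmono : ∀ x y, G x < G y → Q y ≤ Q x)
    {α : ℝ} (hα : 0 ≤ α) (x : X) :
    (G x : ℝ) ≤ ∑ y, (Q y / Q x) ^ α := by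
  have hQle : ∀ y ∈ ({y | G y ≤ G x} : Finset X), Q x ≤ Q y := by
    intro y hy
    rcases (mem_filter.1 hy).2.lt_or_eq with hlt | heq
    · exact hGmono y x hlt
    · rw [hGinj heq]
  calc (G x : ℝ) ≤ #{y | G y ≤ G x} := by
        exact_mod_cast le_card_filter_apply_le_of_injective hGmem hGinj x
    _ = ∑ _y ∈ ({y | G y ≤ G x} : Finset X), (1 : ℝ) := by simp
    _ ≤ ∑ y ∈ ({y | G y ≤ G x} : Finset X), (Q y / Q x) ^ α :=
        sum_le_sum fun y hy => one_le_rpow ((one_le_div (hQ x)).2 (hQle y hy)) hα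
    _ ≤ ∑ y, (Q y / Q x) ^ α :=
        sum_le_sum_of_subset_of_nonneg (filter_subset _ _) fun y _ _ =>
          rpow_nonneg (div_nonneg (hQ y).le (hQ x).le) α

theorem stmt13_general {X : Type*} [Fintype X]
    (P Q : X → ℝ) (hP : ∀ x, 0 < P x)
    (hQ : ∀ x, 0 < Q x)
    (ρ : ℝ) (hρ : 0 < ρ) (α : ℝ) (hα : α = 1 / (1 + ρ))
    (G : X → ℕ) (hGmem : ∀ x, G x ∈ Finset.Icc 1 (Fintype.card X))
    (hGinj : Function.Injective G)
    (hGmono : ∀ x y, G x < G y → Q y ≤ Q x) :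
    (1 / ρ) * Real.logb 2 (∑ x, P x * (G x : ℝ) ^ ρ) ≤
      (1 / (1 - α)) * Real.logb 2 (∑ x, P x ^ α)
      + ((α / (1 - α)) * Real.logb 2
          (∑ x, P x * (∑ x', (Q x' / Q x) ^ α) ^ ((1 - α) / α))
        - (1 / (1 - α)) * Real.logb 2 (∑ x, P x ^ α)) := by
  have hαpos : 0 < α := by rw [hα]; positivity
  have hexp : (1 - α) / α = ρ := by rw [hα]; field_simp; ring
  have hscale : α / (1 - α) = 1 / ρ := by rw [← one_div_div, hexp]
  rw [add_sub_cancel, hscale, hexp]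
  rcases isEmpty_or_nonempty X with hX | hX
  · simp
  have hGpos : ∀ x, (0 : ℝ) < G x := fun x => by exact_mod_cast (mem_Icc.1 (hGmem x)).1
  have hmoment_pos : 0 < ∑ x, P x * (G x : ℝ) ^ ρ :=
    sum_pos (fun x _ => mul_pos (hP x) (rpow_pos_of_pos (hGpos x) ρ)) univ_nonempty
  refine mul_le_mul_of_nonneg_left (logb_le_logb_of_le one_lt_two hmoment_pos ?_) (by positivity)
  exact sum_le_sum fun x _ => mul_le_mul_of_nonneg_left (rpow_le_rpow (hGpos x).le
    (natCast_le_sum_rpow_div_of_antitone_rank hQ hGmem hGinj hGmono hαpos.le x) hρ.le) (hP x).le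

theorem stmt13 {X : Type*} [Fintype X]
    (P Q : X → ℝ) (hP : ∀ x, 0 < P x) (hPsum : ∑ x, P x = 1)
    (hQ : ∀ x, 0 < Q x) (hQsum : ∑ x, Q x = 1)
    (ρ : ℝ) (hρ : 0 < ρ) (α : ℝ) (hα : α = 1 / (1 + ρ))
    (G : X → ℕ) (hGmem : ∀ x, G x ∈ Finset.Icc 1 (Fintype.card X))
    (hGinj : Function.Injective G)
    (hGmono : ∀ x y, G x < G y → Q y ≤ Q x) :
    (1 / ρ) * Real.logb 2 (∑ x, P x * (G x : ℝ) ^ ρ) ≤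
      (1 / (1 - α)) * Real.logb 2 (∑ x, P x ^ α)
      + ((α / (1 - α)) * Real.logb 2
          (∑ x, P x * (∑ x', (Q x' / Q x) ^ α) ^ ((1 - α) / α))
        - (1 / (1 - α)) * Real.logb 2 (∑ x, P x ^ α)) :=
  stmt13_general P Q hP hQ ρ hρ α hα G hGmem hGinj hGmono
end

section
/- Let X be a finite set, P a probability distribution on X with full support, and P̂ a probability distribution on X with full support. For a positive integer ρ, define the expected factorial moment of memoryless guessing as E_P[V_{P̂,ρ}(X)] = ∑_x P(x)·P̂(x)^{-ρ} (using the identity E[V] = E_P[P̂(X)^{-ρ}]). Then (1/ρ)·log(∑_x P(x)·P̂(x)^{-ρ}) ≥ H_α(P) with α = 1/(1+ρ), and equality holds if and only if P̂(x) = P(x)^α / ∑_y P(y)^α for all x. -/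
open Real Finset

/-!
Write `S = ∑ P^α` and `Q = P^α / S` for the escort distribution. Since `α (1 + ρ) = 1` we have
`P = (S Q)^(1+ρ)`, hence `∑ P P̂^(-ρ) = S^(1+ρ) · ∑ P̂ (Q / P̂)^(1+ρ)`. After taking `(1/ρ) log`, the
first factor contributes exactly `H_α(P)`, because `(1 + ρ) / ρ = 1 / (1 - α)`. The second factor is
at least `1` by Jensen's inequality for the strictly convex `t ↦ t^(1+ρ)` with weights `P̂` at the
points `Q / P̂` (whose `P̂`-mean is `∑ Q = 1`), with equality iff `Q / P̂` is constant, i.e. `P̂ = Q`.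
-/

noncomputable def escort {X : Type*} [Fintype X] (P : X → ℝ) (α : ℝ) (x : X) : ℝ :=
  P x ^ α / ∑ y, P y ^ α

section Escort

variable {X : Type*} [Fintype X] {P : X → ℝ} {α : ℝ}

lemma escort_nonneg (hP : ∀ x, 0 ≤ P x) (x : X) : 0 ≤ escort P α x :=
  div_nonneg (rpow_nonneg (hP x) α) (sum_nonneg fun y _ ↦ rpow_nonneg (hP y) α)

lemma sum_escort (h : ∑ y, P y ^ α ≠ 0) : ∑ x, escort P α x = 1 := by
  simp only [escort, ← sum_div, div_self h]

lemma escort_rpow (hP : ∀ x, 0 ≤ P x) {p : ℝ} (hαp : α * p = 1) (x : X) :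
    escort P α x ^ p = P x / (∑ y, P y ^ α) ^ p := by
  rw [escort, div_rpow (rpow_nonneg (hP x) α) (sum_nonneg fun y _ ↦ rpow_nonneg (hP y) α),
    ← rpow_mul (hP x), hαp, rpow_one]

end Escort

section Jensen

variable {ι : Type*} [Fintype ι] {w q : ι → ℝ}

lemma sum_mul_div_of_pos (hw : ∀ i, 0 < w i) (hq : ∑ i, q i = 1) :
    ∑ i, w i * (q i / w i) = 1 := by
  simp_rw [mul_div_cancel₀ _ (hw _).ne', hq]

lemma one_le_sum_mul_div_rpow (hw : ∀ i, 0 < w i) (hw₁ : ∑ i, w i = 1) (hq : ∀ i, 0 ≤ q i)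
    (hq₁ : ∑ i, q i = 1) {p : ℝ} (hp : 1 ≤ p) : 1 ≤ ∑ i, w i * (q i / w i) ^ p := by
  have := (convexOn_rpow hp).map_sum_le (t := univ) (p := fun i ↦ q i / w i)
    (fun i _ ↦ (hw i).le) hw₁ fun i _ ↦ Set.mem_Ici.2 (div_nonneg (hq i) (hw i).le)
  simpa only [smul_eq_mul, sum_mul_div_of_pos hw hq₁, one_rpow] using this

lemma sum_mul_div_rpow_eq_one_iff (hw : ∀ i, 0 < w i) (hw₁ : ∑ i, w i = 1) (hq : ∀ i, 0 ≤ q i)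
    (hq₁ : ∑ i, q i = 1) {p : ℝ} (hp : 1 < p) :
    ∑ i, w i * (q i / w i) ^ p = 1 ↔ ∀ i, q i = w i := by
  have := (strictConvexOn_rpow hp).map_sum_eq_iff (t := univ) (p := fun i ↦ q i / w i)
    (fun i _ ↦ hw i) hw₁ fun i _ ↦ Set.mem_Ici.2 (div_nonneg (hq i) (hw i).le)
  simp only [smul_eq_mul, sum_mul_div_of_pos hw hq₁, one_rpow, mem_univ, forall_const] at this
  rw [eq_comm, this]
  exact forall_congr' fun i ↦ div_eq_one_iff_eq (hw i).ne'

end Jensen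

lemma sum_mul_rpow_neg_eq {X : Type*} [Fintype X] {P Phat : X → ℝ} (hP : ∀ x, 0 ≤ P x)
    (hPhat : ∀ x, 0 < Phat x) {α ρ : ℝ} (hα : α * (1 + ρ) = 1) (hS : 0 < ∑ y, P y ^ α) :
    ∑ x, P x * Phat x ^ (-ρ) =
      (∑ y, P y ^ α) ^ (1 + ρ) * ∑ x, Phat x * (escort P α x / Phat x) ^ (1 + ρ) := by
  rw [mul_sum]
  refine sum_congr rfl fun x _ ↦ ?_
  rw [div_rpow (escort_nonneg hP x) (hPhat x).le, escort_rpow hP hα, rpow_neg (hPhat x).le,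
    rpow_add (hPhat x), rpow_one]
  field_simp
  rw [mul_div_mul_right _ _ (hPhat x).ne']

theorem stmt14_general {X : Type*} [Fintype X] [Nonempty X]
    (P : X → ℝ) (hP : ∀ x, 0 < P x)
    (Phat : X → ℝ) (hPhat : ∀ x, 0 < Phat x) (hPhatsum : ∑ x, Phat x = 1)
    (ρ : ℕ) (hρ : 0 < ρ) (α : ℝ) (hα : α = 1 / (1 + (ρ : ℝ))) :
    ((1 / (ρ : ℝ)) * Real.logb 2 (∑ x, P x * Phat x ^ (-(ρ : ℝ))) ≥
      (1 / (1 - α)) * Real.logb 2 (∑ x, P x ^ α)) ∧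
    ((1 / (ρ : ℝ)) * Real.logb 2 (∑ x, P x * Phat x ^ (-(ρ : ℝ))) =
      (1 / (1 - α)) * Real.logb 2 (∑ x, P x ^ α) ↔
      ∀ x, Phat x = P x ^ α / ∑ y, P y ^ α) := by
  have hρ' : (0 : ℝ) < ρ := Nat.cast_pos.2 hρ
  have hαρ : α * (1 + ρ) = 1 := by rw [hα]; field_simp
  have hS : 0 < ∑ y, P y ^ α := sum_pos (fun x _ ↦ rpow_pos_of_pos (hP x) α) univ_nonempty
  have hQ := escort_nonneg (α := α) fun x ↦ (hP x).le
  have h1α : 1 / (1 - α) = (1 + ρ) / ρ := by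
    rw [hα, one_sub_div (by positivity), one_div_div, add_sub_cancel_left]
  set D := ∑ x, Phat x * (escort P α x / Phat x) ^ (1 + (ρ : ℝ))
  have hD : 1 ≤ D :=
    one_le_sum_mul_div_rpow hPhat hPhatsum hQ (sum_escort hS.ne') (by linarith)
  have hsplit : 1 / (ρ : ℝ) * logb 2 (∑ x, P x * Phat x ^ (-(ρ : ℝ))) =
      1 / (1 - α) * logb 2 (∑ y, P y ^ α) + 1 / ρ * logb 2 D := by
    rw [sum_mul_rpow_neg_eq (fun x ↦ (hP x).le) hPhat hαρ hS,
      logb_mul (rpow_pos_of_pos hS _).ne' (by linarith), logb_rpow_eq_mul_logb_of_pos hS, h1α]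
    ring
  rw [hsplit]
  constructor
  · exact le_add_of_nonneg_right (mul_nonneg (by positivity) (logb_nonneg one_lt_two hD))
  · have hlogD : logb 2 D = 0 ↔ D = 1 :=
      ⟨fun h ↦ le_antisymm ((logb_nonpos_iff one_lt_two (by linarith)).1 h.le) hD,
        fun h ↦ h ▸ logb_one⟩
    rw [add_eq_left, mul_eq_zero, or_iff_right (by positivity), hlogD,
      sum_mul_div_rpow_eq_one_iff hPhat hPhatsum hQ (sum_escort hS.ne') (by linarith)]
    exact forall_congr' fun _ ↦ eq_comm

theorem stmt14 {X : Type*} [Fintype X] [Nonempty X]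
    (P : X → ℝ) (hP : ∀ x, 0 < P x) (hPsum : ∑ x, P x = 1)
    (Phat : X → ℝ) (hPhat : ∀ x, 0 < Phat x) (hPhatsum : ∑ x, Phat x = 1)
    (ρ : ℕ) (hρ : 0 < ρ) (α : ℝ) (hα : α = 1 / (1 + (ρ : ℝ))) :
    ((1 / (ρ : ℝ)) * Real.logb 2 (∑ x, P x * Phat x ^ (-(ρ : ℝ))) ≥
      (1 / (1 - α)) * Real.logb 2 (∑ x, P x ^ α)) ∧
    ((1 / (ρ : ℝ)) * Real.logb 2 (∑ x, P x * Phat x ^ (-(ρ : ℝ))) =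
      (1 / (1 - α)) * Real.logb 2 (∑ x, P x ^ α) ↔
      ∀ x, Phat x = P x ^ α / ∑ y, P y ^ α) :=
  stmt14_general P hP Phat hPhat hPhatsum ρ hρ α hα
end

section
/- Let X be a finite set, P and Q probability distributions on X with full support, ρ > 0 an integer, α = 1/(1+ρ), and Q̂*(x) = Q(x)^α / ∑_y Q(y)^α. Then (1/ρ)·log(∑_x P(x)·Q̂*(x)^{-ρ}) = H_α(P) + I_α(P,Q). -/
open Real Finset

/-! Since `Q̂*(x)⁻¹ = ∑_{x'} (Q(x')/Q(x))^α` and `ρ = (1-α)/α`, the guessing exponent is exactly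
the first term of `I_α(P,Q)`, and the two Rényi-entropy terms on the right cancel. -/

theorem escort_rpow_neg {X : Type*} [Fintype X] {Q : X → ℝ} (hQ : ∀ x, 0 < Q x)
    (α r : ℝ) (x : X) :
    (Q x ^ α / ∑ y, Q y ^ α) ^ (-r) = (∑ y, (Q y / Q x) ^ α) ^ r := by
  have hQx : 0 < Q x ^ α := rpow_pos_of_pos (hQ x) α
  have hS : 0 < ∑ y, Q y ^ α :=
    sum_pos (fun y _ => rpow_pos_of_pos (hQ y) α) ⟨x, mem_univ x⟩
  have hratio : ∑ y, (Q y / Q x) ^ α = (∑ y, Q y ^ α) / Q x ^ α := by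
    rw [sum_div]
    exact sum_congr rfl fun y _ => div_rpow (hQ y).le (hQ x).le α
  rw [hratio, rpow_neg (div_pos hQx hS).le, ← inv_rpow (div_pos hQx hS).le, inv_div]

section OrderParameter

variable {α ρ : ℝ}

theorem one_sub_div_of_eq_one_div_one_add (hρ : 0 ≤ ρ) (hα : α = 1 / (1 + ρ)) :
    (1 - α) / α = ρ := by
  subst hα
  field_simp
  ring

theorem div_one_sub_of_eq_one_div_one_add (hρ : 0 ≤ ρ) (hα : α = 1 / (1 + ρ)) :
    α / (1 - α) = 1 / ρ := by
  subst hα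
  have h : 1 - 1 / (1 + ρ) = ρ / (1 + ρ) := by field_simp; ring
  rw [h, div_div_div_cancel_right₀ (by positivity)]

end OrderParameter

theorem stmt15_general {X : Type*} [Fintype X]
    (P Q : X → ℝ)
    (hQ : ∀ x, 0 < Q x)
    (ρ : ℕ) (α : ℝ) (hα : α = 1 / (1 + (ρ : ℝ)))
    (Qhat : X → ℝ) (hQhat : ∀ x, Qhat x = Q x ^ α / ∑ y, Q y ^ α) :
    (1 / (ρ : ℝ)) * Real.logb 2 (∑ x, P x * Qhat x ^ (-(ρ : ℝ))) =
      (1 / (1 - α)) * Real.logb 2 (∑ x, P x ^ α)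
      + ((α / (1 - α)) * Real.logb 2
          (∑ x, P x * (∑ x', (Q x' / Q x) ^ α) ^ ((1 - α) / α))
        - (1 / (1 - α)) * Real.logb 2 (∑ x, P x ^ α)) := by
  have hρ : (0 : ℝ) ≤ ρ := ρ.cast_nonneg
  simp_rw [hQhat, escort_rpow_neg hQ, one_sub_div_of_eq_one_div_one_add hρ hα,
    div_one_sub_of_eq_one_div_one_add hρ hα]
  ring

theorem stmt15 {X : Type*} [Fintype X]
    (P Q : X → ℝ) (hP : ∀ x, 0 < P x) (hPsum : ∑ x, P x = 1)
    (hQ : ∀ x, 0 < Q x) (hQsum : ∑ x, Q x = 1)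
    (ρ : ℕ) (hρ : 0 < ρ) (α : ℝ) (hα : α = 1 / (1 + (ρ : ℝ)))
    (Qhat : X → ℝ) (hQhat : ∀ x, Qhat x = Q x ^ α / ∑ y, Q y ^ α) :
    (1 / (ρ : ℝ)) * Real.logb 2 (∑ x, P x * Qhat x ^ (-(ρ : ℝ))) =
      (1 / (1 - α)) * Real.logb 2 (∑ x, P x ^ α)
      + ((α / (1 - α)) * Real.logb 2
          (∑ x, P x * (∑ x', (Q x' / Q x) ^ α) ^ ((1 - α) / α))
        - (1 / (1 - α)) * Real.logb 2 (∑ x, P x ^ α)) :=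
  stmt15_general P Q hQ ρ α hα Qhat hQhat
end

section
/- Let X be a finite set, P a probability distribution on X with full support, ρ ∈ (-1,0) ∪ (0,∞), α = 1/(1+ρ), and 𝒜 a partition of X into M nonempty blocks with partition function A (A(x) is the size of the block containing x). Then (1/ρ)·log(∑_x P(x)·A(x)^ρ) ≥ H_α(P) − log M, where H_α(P) = (1/(1-α)) log ∑_x P(x)^α. -/
open Real Finset

/-!
With weights `w x = 1 / A x`, which sum to the number of blocks `M`, the bound is the weighted
Hölder inequality `∑ w f ≤ (∑ w) ^ (1 - 1/p) (∑ w f ^ p) ^ (1/p)`, taken with `p = 1 + ρ` and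
`w f = P ^ α` when `ρ > 0`, and with `p = α` and `w f = P A ^ ρ` when `ρ < 0`; in the second
case the inequality is reversed on dividing its logarithm by `ρ`.
-/

section Partition

variable {X : Type*} [Fintype X] [DecidableEq X] {B : X → Finset X}

lemma filter_block_eq (hmem : ∀ x, x ∈ B x) (hblock : ∀ x y, y ∈ B x → B y = B x) (x : X) :
    ({y | B y = B x} : Finset X) = B x := by
  ext y
  rw [mem_filter_univ]
  exact ⟨fun h => h ▸ hmem y, hblock x y⟩

lemma sum_inv_card_block_eq_card_blocks (hmem : ∀ x, x ∈ B x)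
    (hblock : ∀ x y, y ∈ B x → B y = B x) :
    ∑ x, ((B x).card : ℝ)⁻¹ = (univ.image B).card := by
  rw [card_eq_sum_ones, Nat.cast_sum, sum_image' _ fun x _ => ?_]
  rw [filter_block_eq hmem hblock, sum_congr rfl fun y hy => by rw [hblock x y hy], sum_const,
    nsmul_eq_mul, Nat.cast_one, mul_inv_cancel₀]
  exact_mod_cast (card_pos.mpr ⟨x, hmem x⟩).ne'

end Partition

lemma logb_sum_mul_le {ι : Type*} {s : Finset ι} (hs : s.Nonempty) {b p : ℝ} (hb : 1 < b)
    (hp : 1 ≤ p) {w f : ι → ℝ} (hw : ∀ i, 0 < w i) (hf : ∀ i, 0 < f i) :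
    logb b (∑ i ∈ s, w i * f i) ≤
      (1 - p⁻¹) * logb b (∑ i ∈ s, w i) + p⁻¹ * logb b (∑ i ∈ s, w i * f i ^ p) := by
  have hW : 0 < ∑ i ∈ s, w i := sum_pos (fun i _ => hw i) hs
  have hWF : 0 < ∑ i ∈ s, w i * f i ^ p :=
    sum_pos (fun i _ => mul_pos (hw i) (rpow_pos_of_pos (hf i) p)) hs
  calc logb b (∑ i ∈ s, w i * f i)
      ≤ logb b ((∑ i ∈ s, w i) ^ (1 - p⁻¹) * (∑ i ∈ s, w i * f i ^ p) ^ p⁻¹) :=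
        logb_le_logb_of_le hb (sum_pos (fun i _ => mul_pos (hw i) (hf i)) hs)
          (inner_le_weight_mul_Lp_of_nonneg s hp w f (fun i => (hw i).le) (fun i => (hf i).le))
    _ = _ := by
        rw [logb_mul (rpow_pos_of_pos hW _).ne' (rpow_pos_of_pos hWF _).ne',
          logb_rpow_eq_mul_logb_of_pos hW, logb_rpow_eq_mul_logb_of_pos hWF]

lemma inv_mul_rpow_one_add {a : ℝ} (ha : 0 < a) (ρ : ℝ) : a⁻¹ * a ^ (1 + ρ) = a ^ ρ := by
  rw [rpow_add ha, rpow_one, inv_mul_cancel_left₀ ha.ne']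

theorem renyi_sub_logb_sum_inv_le_moment {X : Type*} [Fintype X] [Nonempty X] {P A : X → ℝ}
    (hP : ∀ x, 0 < P x) (hA : ∀ x, 0 < A x) {ρ : ℝ}
    (hρ : ρ ∈ Set.Ioo (-1 : ℝ) 0 ∪ Set.Ioi (0 : ℝ)) :
    (1 + ρ) / ρ * logb 2 (∑ x, P x ^ (1 + ρ)⁻¹) - logb 2 (∑ x, (A x)⁻¹) ≤
      ρ⁻¹ * logb 2 (∑ x, P x * A x ^ ρ) := by
  have hAinv (x : X) : 0 < (A x)⁻¹ := inv_pos.mpr (hA x)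
  rcases hρ with ⟨hρ₁, hρ₀ : ρ < 0⟩ | (hρ₀ : 0 < ρ)
  · have hρ₀' : ρ ≠ 0 := hρ₀.ne
    have hp : 1 ≤ (1 + ρ)⁻¹ := (one_le_inv₀ (by linarith)).mpr (by linarith)
    have hwf (x : X) : (A x)⁻¹ * (P x * A x ^ (1 + ρ)) = P x * A x ^ ρ := by
      rw [mul_left_comm, inv_mul_rpow_one_add (hA x)]
    have hwfp (x : X) : (A x)⁻¹ * (P x * A x ^ (1 + ρ)) ^ (1 + ρ)⁻¹ = P x ^ (1 + ρ)⁻¹ := by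
      rw [mul_rpow (hP x).le (rpow_nonneg (hA x).le _), ← rpow_mul (hA x).le,
        mul_inv_cancel₀ (by linarith), rpow_one, mul_left_comm, inv_mul_cancel₀ (hA x).ne',
        mul_one]
    have holder := logb_sum_mul_le univ_nonempty one_lt_two hp hAinv
      (fun x => mul_pos (hP x) (rpow_pos_of_pos (hA x) (1 + ρ)))
    simp only [hwf, hwfp, inv_inv] at holder
    calc (1 + ρ) / ρ * logb 2 (∑ x, P x ^ (1 + ρ)⁻¹) - logb 2 (∑ x, (A x)⁻¹)
        = ρ⁻¹ * ((1 - (1 + ρ)) * logb 2 (∑ x, (A x)⁻¹) +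
            (1 + ρ) * logb 2 (∑ x, P x ^ (1 + ρ)⁻¹)) := by
          field_simp
          ring
      _ ≤ ρ⁻¹ * logb 2 (∑ x, P x * A x ^ ρ) :=
          mul_le_mul_of_nonpos_left holder (inv_nonpos.mpr hρ₀.le)
  · have hwf (x : X) : (A x)⁻¹ * (P x ^ (1 + ρ)⁻¹ * A x) = P x ^ (1 + ρ)⁻¹ := by
      rw [mul_left_comm, inv_mul_cancel₀ (hA x).ne', mul_one]
    have hwfp (x : X) : (A x)⁻¹ * (P x ^ (1 + ρ)⁻¹ * A x) ^ (1 + ρ) = P x * A x ^ ρ := by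
      rw [mul_rpow (rpow_nonneg (hP x).le _) (hA x).le, ← rpow_mul (hP x).le,
        inv_mul_cancel₀ (by linarith), rpow_one, mul_left_comm, inv_mul_rpow_one_add (hA x)]
    have holder := logb_sum_mul_le univ_nonempty one_lt_two (by linarith : (1 : ℝ) ≤ 1 + ρ) hAinv
      (fun x => mul_pos (rpow_pos_of_pos (hP x) (1 + ρ)⁻¹) (hA x))
    simp only [hwf, hwfp] at holder
    calc (1 + ρ) / ρ * logb 2 (∑ x, P x ^ (1 + ρ)⁻¹) - logb 2 (∑ x, (A x)⁻¹)
        ≤ (1 + ρ) / ρ * ((1 - (1 + ρ)⁻¹) * logb 2 (∑ x, (A x)⁻¹) +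
            (1 + ρ)⁻¹ * logb 2 (∑ x, P x * A x ^ ρ)) - logb 2 (∑ x, (A x)⁻¹) := by
          gcongr
      _ = ρ⁻¹ * logb 2 (∑ x, P x * A x ^ ρ) := by
          field_simp
          ring

theorem stmt17_general {X : Type*} [Fintype X] [DecidableEq X]
    (P : X → ℝ) (hP : ∀ x, 0 < P x)
    (ρ : ℝ) (hρ : ρ ∈ Set.Ioo (-1 : ℝ) 0 ∪ Set.Ioi (0 : ℝ))
    (α : ℝ) (hα : α = 1 / (1 + ρ))
    (B : X → Finset X) (hmem : ∀ x, x ∈ B x)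
    (hblock : ∀ x y, y ∈ B x → B y = B x)
    (M : ℕ) (hM : (Finset.univ.image B).card = M) :
    (1 / ρ) * Real.logb 2 (∑ x, P x * ((B x).card : ℝ) ^ ρ) ≥
      (1 / (1 - α)) * Real.logb 2 (∑ x, P x ^ α) - Real.logb 2 M := by
  rcases isEmpty_or_nonempty X with hX | hX
  · simp [← hM]
  have hρ₁ : 1 + ρ ≠ 0 := by rcases hρ with ⟨h, _⟩ | (h : 0 < ρ) <;> linarith
  have hα' : 1 / (1 - α) = (1 + ρ) / ρ := by
    rw [hα, one_sub_div hρ₁, add_sub_cancel_left, one_div_div]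
  rw [← hM, ← sum_inv_card_block_eq_card_blocks hmem hblock, hα', hα, one_div, one_div]
  have hcard (x : X) : (0 : ℝ) < (B x).card := by exact_mod_cast card_pos.mpr ⟨x, hmem x⟩
  exact renyi_sub_logb_sum_inv_le_moment hP hcard hρ

theorem stmt17 {X : Type*} [Fintype X] [DecidableEq X]
    (P : X → ℝ) (hP : ∀ x, 0 < P x) (hPsum : ∑ x, P x = 1)
    (ρ : ℝ) (hρ : ρ ∈ Set.Ioo (-1 : ℝ) 0 ∪ Set.Ioi (0 : ℝ))
    (α : ℝ) (hα : α = 1 / (1 + ρ))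
    (B : X → Finset X) (hmem : ∀ x, x ∈ B x)
    (hblock : ∀ x y, y ∈ B x → B y = B x)
    (M : ℕ) (hM : (Finset.univ.image B).card = M) :
    (1 / ρ) * Real.logb 2 (∑ x, P x * ((B x).card : ℝ) ^ ρ) ≥
      (1 / (1 - α)) * Real.logb 2 (∑ x, P x ^ α) - Real.logb 2 M :=
  stmt17_general P hP ρ hρ α hα B hmem hblock M hM
end
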